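/- arXiv:2311.04603 — 12 statements merged into one kernel-verified Lean document; each statement's English description precedes it below -/
import Mathlib

section
/- For every number of servers M ∈ ℕ with M ≥ 1, the Erlang-B blocking probability a ↦ B(M, a) is strictly increasing on (0, ∞); moreover, for every fixed offered load a > 0, B(M+1, a) < B(M, a), i.e. the blocking probability is strictly decreasing in the number of servers. -/
lemma erlangS_pos (M : ℕ) {a : ℝ} (ha : 0 < a) :
    0 < ∑ j ∈ Finset.range (M + 1), a ^ j / (Nat.factorial j : ℝ) := by
  apply Finset.sum_pos
  · intro j _
    positivity
  · exact ⟨0, Finset.mem_range.mpr (Nat.succ_pos M)⟩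

/-- The Erlang-B blocking probability with `M` servers and offered load `a`:
`B(M, a) = (a^M / M!) / (∑_{j=0}^{M} a^j / j!)`. -/
noncomputable def ErlangB (M : ℕ) (a : ℝ) : ℝ :=
  (a ^ M / (Nat.factorial M : ℝ)) / (∑ j ∈ Finset.range (M + 1), a ^ j / (Nat.factorial j : ℝ))

/-- For every number of servers `M ≥ 1`, the Erlang-B blocking probability `a ↦ B(M, a)`
is strictly increasing on `(0, ∞)`; moreover, for every fixed offered load `a > 0`,
`B(M+1, a) < B(M, a)`, i.e. the blocking probability is strictly decreasing in the
number of servers. -/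
theorem erlangB_strictMonoOn_and_strict_anti_in_servers (M : ℕ) (hM : 1 ≤ M) :
    StrictMonoOn (fun a => ErlangB M a) (Set.Ioi (0 : ℝ)) ∧
      ∀ a : ℝ, 0 < a → ErlangB (M + 1) a < ErlangB M a := by
  constructor
  · intro a ha b hb hab
    simp only [Set.mem_Ioi] at ha hb
    have hSa := erlangS_pos M ha
    have hSb := erlangS_pos M hb
    simp only [ErlangB]
    rw [div_lt_div_iff₀ hSa hSb, Finset.mul_sum, Finset.mul_sum]
    apply Finset.sum_lt_sum
    · intro j hj
      have hjM : j ≤ M := Nat.lt_succ_iff.mp (Finset.mem_range.mp hj)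
      rw [div_mul_div_comm, div_mul_div_comm,
        div_le_div_iff₀ (by positivity) (by positivity)]
      have h1 : a ^ M * b ^ j = a ^ (M - j) * (a ^ j * b ^ j) := by
        rw [← mul_assoc, ← pow_add, Nat.sub_add_cancel hjM]
      have h2 : b ^ M * a ^ j = b ^ (M - j) * (a ^ j * b ^ j) := by
        have : b ^ (M - j) * (a ^ j * b ^ j) = b ^ (M - j) * b ^ j * a ^ j := by ring
        rw [this, ← pow_add, Nat.sub_add_cancel hjM]
      rw [h1, h2]
      have hpow : a ^ (M - j) ≤ b ^ (M - j) := pow_le_pow_left₀ ha.le hab.le _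
      have habj : (0:ℝ) ≤ a ^ j * b ^ j := by positivity
      exact mul_le_mul_of_nonneg_right
        (mul_le_mul_of_nonneg_right hpow habj) (by positivity)
    · refine ⟨0, Finset.mem_range.mpr (Nat.succ_pos M), ?_⟩
      simp only [pow_zero, Nat.factorial_zero, Nat.cast_one, div_one, mul_one]
      have : a ^ M < b ^ M := pow_lt_pow_left₀ hab ha.le (Nat.one_le_iff_ne_zero.mp hM)
      gcongr
  · intro a ha
    have hS := erlangS_pos M ha
    have hT := erlangS_pos (M + 1) ha
    simp only [ErlangB]
    rw [div_lt_div_iff₀ hT hS, Finset.mul_sum, Finset.mul_sum,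
      Finset.sum_range_succ'
        (fun j => a ^ M / (Nat.factorial M : ℝ) * (a ^ j / (Nat.factorial j : ℝ))) (M + 1)]
    have hle : ∑ j ∈ Finset.range (M + 1),
        a ^ (M + 1) / (Nat.factorial (M + 1) : ℝ) * (a ^ j / (Nat.factorial j : ℝ)) ≤
        ∑ j ∈ Finset.range (M + 1),
        a ^ M / (Nat.factorial M : ℝ) * (a ^ (j + 1) / (Nat.factorial (j + 1) : ℝ)) := by
      apply Finset.sum_le_sum
      intro j hj
      have hjM : j ≤ M := Nat.lt_succ_iff.mp (Finset.mem_range.mp hj)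
      rw [div_mul_div_comm, div_mul_div_comm, ← pow_add, ← pow_add]
      have hexp : M + 1 + j = M + (j + 1) := by omega
      rw [hexp]
      have hfac : (Nat.factorial M : ℝ) * (Nat.factorial (j + 1)) ≤
          (Nat.factorial (M + 1)) * (Nat.factorial j) := by
        have : Nat.factorial M * Nat.factorial (j + 1) ≤
            Nat.factorial (M + 1) * Nat.factorial j := by
          rw [Nat.factorial_succ, Nat.factorial_succ]
          calc Nat.factorial M * ((j + 1) * Nat.factorial j)
              = (j + 1) * (Nat.factorial M * Nat.factorial j) := by ring
            _ ≤ (M + 1) * (Nat.factorial M * Nat.factorial j) :=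
                Nat.mul_le_mul_right _ (by omega)
            _ = (M + 1) * Nat.factorial M * Nat.factorial j := by ring
        exact_mod_cast this
      gcongr
    have hpos : 0 < a ^ M / (Nat.factorial M : ℝ) * (a ^ 0 / (Nat.factorial 0 : ℝ)) := by
      positivity
    linarith
end

section
/- Statistical economies of scale for the Erlang-B system: for all naturals 1 ≤ N < N' and every real a > 0, scaling both the number of servers and the offered load by the same factor strictly decreases the blocking probability, i.e. B(N', (N'/N)·a) < B(N, a). -/
open Finset

theorem Nat.descFactorial_mul_pow_le_descFactorial_mul_pow {n m : ℕ} (hnm : n ≤ m) (k : ℕ) :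
    n.descFactorial k * m ^ k ≤ m.descFactorial k * n ^ k := by
  induction k with
  | zero => simp
  | succ k ih =>
    have hfactor : (n - k) * m ≤ (m - k) * n := by
      rw [Nat.sub_mul, Nat.sub_mul, mul_comm m n]
      exact Nat.sub_le_sub_left (Nat.mul_le_mul_left k hnm) _
    calc n.descFactorial (k + 1) * m ^ (k + 1)
        = ((n - k) * m) * (n.descFactorial k * m ^ k) := by rw [Nat.descFactorial_succ]; ring
      _ ≤ ((m - k) * n) * (m.descFactorial k * n ^ k) := Nat.mul_le_mul hfactor ih
      _ = m.descFactorial (k + 1) * n ^ (k + 1) := by rw [Nat.descFactorial_succ]; ring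

theorem descFactorial_div_pow_le_scaled {N N' : ℕ} (hN : 0 < N) (hNN' : N ≤ N') {a : ℝ}
    (ha : 0 < a) (k : ℕ) :
    (N.descFactorial k : ℝ) / a ^ k ≤ N'.descFactorial k / ((N' : ℝ) / N * a) ^ k := by
  have hNR : (0 : ℝ) < N := by exact_mod_cast hN
  have hN'R : (0 : ℝ) < N' := by exact_mod_cast hN.trans_le hNN'
  rw [div_mul_eq_mul_div, div_pow, mul_pow, div_div_eq_mul_div,
    div_le_div_iff₀ (by positivity) (by positivity)]
  have hnat := Nat.descFactorial_mul_pow_le_descFactorial_mul_pow hNN' k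
  calc (N.descFactorial k : ℝ) * ((N' : ℝ) ^ k * a ^ k)
      = ((N.descFactorial k * N' ^ k : ℕ) : ℝ) * a ^ k := by push_cast; ring
    _ ≤ ((N'.descFactorial k * N ^ k : ℕ) : ℝ) * a ^ k := by gcongr
    _ = N'.descFactorial k * N ^ k * a ^ k := by push_cast; ring

noncomputable def erlangBInv (M : ℕ) (a : ℝ) : ℝ :=
  ∑ k ∈ range (M + 1), (M.descFactorial k : ℝ) / a ^ k

theorem sum_range_pow_div_factorial_eq_mul_erlangBInv (M : ℕ) {a : ℝ} (ha : a ≠ 0) :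
    ∑ j ∈ range (M + 1), a ^ j / (j.factorial : ℝ)
      = a ^ M / (M.factorial : ℝ) * erlangBInv M a := by
  rw [erlangBInv, mul_sum]
  conv_rhs => rw [← sum_range_reflect]
  refine sum_congr rfl fun j hj => ?_
  have hjM : j ≤ M := Nat.lt_succ_iff.mp (mem_range.mp hj)
  have hfac : (j.factorial : ℝ) * M.descFactorial (M - j) = M.factorial := by
    exact_mod_cast Nat.sub_sub_self hjM ▸ Nat.factorial_mul_descFactorial (Nat.sub_le M j)
  have hpow : a ^ M = a ^ j * a ^ (M - j) := by rw [← pow_add, Nat.add_sub_cancel' hjM]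
  rw [Nat.add_sub_cancel, ← hfac, hpow]
  field_simp

theorem erlangB_eq_inv_erlangBInv (M : ℕ) {a : ℝ} (ha : a ≠ 0) :
    ErlangB M a = (erlangBInv M a)⁻¹ := by
  rw [ErlangB, sum_range_pow_div_factorial_eq_mul_erlangBInv M ha,
    div_mul_cancel_left₀ (by positivity)]

theorem one_le_erlangBInv (M : ℕ) {a : ℝ} (ha : 0 < a) : 1 ≤ erlangBInv M a := by
  simpa [erlangBInv] using single_le_sum (f := fun k => (M.descFactorial k : ℝ) / a ^ k)
    (fun k _ => by positivity) (mem_range.mpr M.succ_pos)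

theorem erlangBInv_lt_erlangBInv_scaled {N N' : ℕ} (hN : 0 < N) (hNN' : N < N') {a : ℝ}
    (ha : 0 < a) : erlangBInv N a < erlangBInv N' ((N' : ℝ) / N * a) := by
  set b : ℝ := (N' : ℝ) / N * a
  have hb : 0 < b := by
    have : (0 : ℝ) < N := by exact_mod_cast hN
    have : (0 : ℝ) < N' := by exact_mod_cast hN.trans hNN'
    positivity
  have hlast : (0 : ℝ) < N'.descFactorial N' / b ^ N' := by
    have : (0 : ℝ) < N'.descFactorial N' := by simp
    positivity
  calc erlangBInv N a ≤ ∑ k ∈ range (N + 1), (N'.descFactorial k : ℝ) / b ^ k :=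
        sum_le_sum fun k _ => descFactorial_div_pow_le_scaled hN hNN'.le ha k
    _ < erlangBInv N' b :=
        sum_lt_sum_of_subset (range_subset_range.mpr (by omega)) (self_mem_range_succ N')
          (by rw [mem_range]; omega) hlast fun k _ _ => by positivity

/-- Statistical economies of scale for the Erlang-B system: for all naturals `1 ≤ N < N'`
and every real `a > 0`, scaling both the number of servers and the offered load by the
same factor strictly decreases the blocking probability: `B(N', (N'/N)·a) < B(N, a)`. -/
theorem erlangB_economies_of_scale (N N' : ℕ) (hN : 1 ≤ N) (hNN' : N < N')
    (a : ℝ) (ha : 0 < a) :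
    ErlangB N' ((N' : ℝ) / (N : ℝ) * a) < ErlangB N a := by
  have hb : 0 < (N' : ℝ) / N * a := by
    have : (0 : ℝ) < N := by exact_mod_cast hN
    have : (0 : ℝ) < N' := by exact_mod_cast hN.trans hNN'.le
    positivity
  rw [erlangB_eq_inv_erlangBInv N ha.ne', erlangB_eq_inv_erlangBInv N' hb.ne']
  exact inv_strictAnti₀ (zero_lt_one.trans_le (one_le_erlangBInv N ha))
    (erlangBInv_lt_erlangBInv_scaled hN hNN' ha)
end

section
/- Integral representation of the reciprocal Erlang-B blocking probability: for every natural M and every real a > 0, a · ∫₀^∞ (1+t)^M e^{−a t} dt = (∑_{j=0}^{M} a^j / j!) / (a^M / M!), i.e. this integral equals 1 / B(M, a). -/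
/-
Expanding `(1 + t)^M` binomially reduces the integral to the Gamma integrals
`∫₀^∞ t^k e^{-a t} dt = k! / a^(k+1)`, so `a ∫₀^∞ (1+t)^M e^{-a t} dt = ∑_k M! / ((M-k)! a^k)`;
reindexing by `j = M - k` turns this into `(M! / a^M) ∑_j a^j / j!`.
-/

open MeasureTheory Real Set
open scoped Nat

theorem integral_pow_mul_exp_neg_mul_Ioi {r : ℝ} (hr : 0 < r) (k : ℕ) :
    ∫ t in Ioi (0 : ℝ), t ^ k * exp (-(r * t)) = k ! / r ^ (k + 1) := by
  have h := integral_rpow_mul_exp_neg_mul_Ioi (a := (k : ℝ) + 1) (by positivity) hr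
  simp only [add_sub_cancel_right, rpow_natCast] at h
  rw [h, Gamma_nat_eq_factorial, ← Nat.cast_succ, rpow_natCast, div_pow, one_pow,
    one_div_mul_eq_div]

theorem integrableOn_pow_mul_exp_neg_mul_Ioi {r : ℝ} (hr : 0 < r) (k : ℕ) :
    IntegrableOn (fun t : ℝ ↦ t ^ k * exp (-(r * t))) (Ioi 0) :=
  .of_integral_ne_zero (by rw [integral_pow_mul_exp_neg_mul_Ioi hr]; positivity)

theorem integral_one_add_pow_mul_exp_neg_mul_Ioi {r : ℝ} (hr : 0 < r) (M : ℕ) :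
    ∫ t in Ioi (0 : ℝ), (1 + t) ^ M * exp (-(r * t)) =
      ∑ k ∈ Finset.range (M + 1), (M.choose k : ℝ) * (k ! / r ^ (k + 1)) := by
  have hexpand (t : ℝ) : (1 + t) ^ M * exp (-(r * t)) =
      ∑ k ∈ Finset.range (M + 1), (M.choose k : ℝ) * (t ^ k * exp (-(r * t))) := by
    rw [add_comm, add_pow, Finset.sum_mul]
    exact Finset.sum_congr rfl fun k _ ↦ by ring
  simp_rw [hexpand]
  rw [integral_finsetSum _ fun k _ ↦ (integrableOn_pow_mul_exp_neg_mul_Ioi hr k).const_mul _]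
  simp_rw [integral_const_mul, integral_pow_mul_exp_neg_mul_Ioi hr]

theorem mul_choose_mul_factorial_div_pow {a : ℝ} (ha : a ≠ 0) {M k : ℕ} (hk : k ≤ M) :
    a * ((M.choose k : ℝ) * (k ! / a ^ (k + 1))) = a ^ (M - k) / (M - k)! / (a ^ M / M !) := by
  have hfac : (M.choose k : ℝ) * k ! * (M - k)! = M ! := by
    exact_mod_cast Nat.choose_mul_factorial_mul_factorial hk
  have hpow : a ^ (M - k) * a ^ k = a ^ M := pow_sub_mul_pow a hk
  rw [← hfac, ← hpow]
  field_simp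
  ring

/-- Integral representation of the reciprocal Erlang-B blocking probability: for every
natural `M` and every real `a > 0`,
`a · ∫₀^∞ (1+t)^M e^{−a t} dt = (∑_{j=0}^{M} a^j / j!) / (a^M / M!) = 1 / B(M, a)`. -/
theorem erlangB_reciprocal_integral (M : ℕ) (a : ℝ) (ha : 0 < a) :
    a * ∫ t in Set.Ioi (0 : ℝ), (1 + t) ^ M * Real.exp (-(a * t)) =
        (∑ j ∈ Finset.range (M + 1), a ^ j / (Nat.factorial j : ℝ)) /
          (a ^ M / (Nat.factorial M : ℝ)) ∧
      a * ∫ t in Set.Ioi (0 : ℝ), (1 + t) ^ M * Real.exp (-(a * t)) = 1 / ErlangB M a := by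
  have key : a * ∫ t in Set.Ioi (0 : ℝ), (1 + t) ^ M * Real.exp (-(a * t)) =
      (∑ j ∈ Finset.range (M + 1), a ^ j / (Nat.factorial j : ℝ)) /
        (a ^ M / (Nat.factorial M : ℝ)) := by
    rw [integral_one_add_pow_mul_exp_neg_mul_Ioi ha, Finset.mul_sum, Finset.sum_div,
      ← Finset.sum_range_reflect (fun j ↦ a ^ j / j ! / (a ^ M / M !))]
    refine Finset.sum_congr rfl fun k hk ↦ ?_
    rw [mul_choose_mul_factorial_div_pow ha.ne' (Finset.mem_range_succ_iff.mp hk),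
      Nat.add_sub_cancel]
  exact ⟨key, by rw [key, ErlangB, one_div_div]⟩
end

section
/- Existence and uniqueness of the Wardrop equilibrium: given any service capacities N₁, …, N_k ∈ ℕ with Nᵢ ≥ 1 for all i, any total arrival rate Λ > 0 and any mean service rate μ > 0, there exists a unique vector (λ₁, …, λ_k) with λᵢ > 0 for all i, ∑ᵢ λᵢ = Λ, and B(Nᵢ, λᵢ/μ) = B(Nⱼ, λⱼ/μ) for all i, j. -/
/-- Given service capacities `N₁, …, N_k` (each `≥ 1`), a total arrival rate `Λ > 0` and a
mean service rate `μ > 0`, a Wardrop equilibrium is a vector `(λ₁, …, λ_k)` of arrival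
rates with `λᵢ > 0` for all `i`, `∑ᵢ λᵢ = Λ`, and equal blocking probabilities
`B(Nᵢ, λᵢ/μ) = B(Nⱼ, λⱼ/μ)` for all `i, j`. -/
def IsWardropEquilibrium (k : ℕ) (N : Fin k → ℕ) (μ Λ : ℝ) (lam : Fin k → ℝ) : Prop :=
  (∀ i, 0 < lam i) ∧ (∑ i, lam i = Λ) ∧
    ∀ i j, ErlangB (N i) (lam i / μ) = ErlangB (N j) (lam j / μ)

open Finset Set Filter Topology Asymptotics

theorem pow_mul_pow_le_pow_mul_pow {R : Type*} [CommSemiring R] [PartialOrder R]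
    [IsOrderedRing R] {a b : R} (ha : 0 ≤ a) (hab : a ≤ b) {j n : ℕ} (hjn : j ≤ n) :
    a ^ n * b ^ j ≤ b ^ n * a ^ j := by
  obtain ⟨d, rfl⟩ := Nat.exists_eq_add_of_le hjn
  have hb : 0 ≤ b := ha.trans hab
  calc a ^ (j + d) * b ^ j = a ^ j * b ^ j * a ^ d := by ring
    _ ≤ a ^ j * b ^ j * b ^ d := by gcongr
    _ = b ^ (j + d) * a ^ j := by ring

section ErlangB

variable {M : ℕ}

theorem sum_range_pow_div_factorial_pos {n : ℕ} (hn : 0 < n) {a : ℝ} (ha : 0 ≤ a) :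
    0 < ∑ j ∈ range n, a ^ j / j.factorial :=
  sum_pos' (fun j _ => by positivity) ⟨0, mem_range.2 hn, by simp⟩

theorem erlangB_zero (hM : 0 < M) : ErlangB M 0 = 0 := by
  simp [ErlangB, zero_pow hM.ne']

theorem erlangB_nonneg {a : ℝ} (ha : 0 ≤ a) : 0 ≤ ErlangB M a :=
  div_nonneg (by positivity) (sum_range_pow_div_factorial_pos M.succ_pos ha).le

theorem erlangB_lt_one (hM : 0 < M) {a : ℝ} (ha : 0 ≤ a) : ErlangB M a < 1 := by
  rw [ErlangB, div_lt_one (sum_range_pow_div_factorial_pos M.succ_pos ha), sum_range_succ]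
  linarith [sum_range_pow_div_factorial_pos hM ha]

theorem erlangB_strictMonoOn (hM : 0 < M) : StrictMonoOn (ErlangB M) (Ici 0) := by
  intro a (ha : 0 ≤ a) b (hb : 0 ≤ b) hab
  rw [ErlangB, ErlangB, div_lt_div_iff₀ (sum_range_pow_div_factorial_pos M.succ_pos ha)
    (sum_range_pow_div_factorial_pos M.succ_pos hb), mul_sum, mul_sum]
  refine sum_lt_sum (fun j hj => ?_) ⟨0, mem_range.2 M.succ_pos, ?_⟩
  · rw [div_mul_div_comm, div_mul_div_comm]
    exact div_le_div_of_nonneg_right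
      (pow_mul_pow_le_pow_mul_pow ha hab.le (Nat.lt_succ_iff.1 (mem_range.1 hj))) (by positivity)
  · simpa using div_lt_div_of_pos_right (pow_lt_pow_left₀ hab ha hM.ne') (by positivity)

theorem erlangB_continuousOn : ContinuousOn (ErlangB M) (Ici 0) :=
  ContinuousOn.div (by fun_prop) (by fun_prop) fun _ ha =>
    (sum_range_pow_div_factorial_pos M.succ_pos ha).ne'

theorem tendsto_erlangB_atTop : Tendsto (ErlangB M) atTop (𝓝 1) := by
  set S : ℝ → ℝ := fun a => ∑ j ∈ range M, a ^ j / j.factorial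
  set T : ℝ → ℝ := fun a => a ^ M / M.factorial
  have hST : S =o[atTop] T := by
    refine IsLittleO.fun_sum fun j hj => ?_
    simpa only [T, div_eq_inv_mul] using
      ((isLittleO_pow_pow_atTop_of_lt (𝕜 := ℝ) (mem_range.1 hj)).const_mul_left
        (j.factorial : ℝ)⁻¹).const_mul_right (by positivity : (M.factorial : ℝ)⁻¹ ≠ 0)
  have hB : ∀ᶠ a in atTop, (S a / T a + 1)⁻¹ = ErlangB M a := by
    filter_upwards [eventually_gt_atTop 0] with a ha
    rw [div_add_one (by positivity), inv_div, ErlangB, sum_range_succ]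
  simpa using ((hST.tendsto_div_nhds_zero.add_const 1).inv₀ (by norm_num)).congr' hB

theorem erlangB_surjOn (hM : 0 < M) : SurjOn (ErlangB M) (Ici 0) (Ico 0 1) := by
  intro b ⟨hb₀, hb₁⟩
  obtain ⟨A, hbA, hA⟩ :=
    ((tendsto_erlangB_atTop.eventually (eventually_gt_nhds hb₁)).and
      (eventually_ge_atTop 0)).exists
  obtain ⟨a, ha, hab⟩ := intermediate_value_Icc hA (erlangB_continuousOn.mono Icc_subset_Ici_self)
    ⟨(erlangB_zero hM).trans_le hb₀, hbA.le⟩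
  exact ⟨a, ha.1, hab⟩

noncomputable def erlangBOrderIso (hM : 0 < M) : Ici (0 : ℝ) ≃o Ico (0 : ℝ) 1 :=
  StrictMono.orderIsoOfSurjective
    (fun a => ⟨ErlangB M a, erlangB_nonneg a.2, erlangB_lt_one hM a.2⟩)
    (fun a b hab => erlangB_strictMonoOn hM a.2 b.2 hab)
    (fun b => let ⟨a, ha, hab⟩ := erlangB_surjOn hM b.2; ⟨⟨a, ha⟩, Subtype.ext hab⟩)

theorem coe_erlangBOrderIso (hM : 0 < M) (a : Ici (0 : ℝ)) :
    (erlangBOrderIso hM a : ℝ) = ErlangB M a :=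
  rfl

theorem erlangB_erlangBOrderIso_symm (hM : 0 < M) (b : Ico (0 : ℝ) 1) :
    ErlangB M ((erlangBOrderIso hM).symm b) = b := by
  rw [← coe_erlangBOrderIso hM, OrderIso.apply_symm_apply]

theorem erlangBOrderIso_symm_pos_iff (hM : 0 < M) (b : Ico (0 : ℝ) 1) :
    0 < ((erlangBOrderIso hM).symm b : ℝ) ↔ 0 < (b : ℝ) := by
  change ((⊥ : Ici (0 : ℝ)) : ℝ) < _ ↔ _
  rw [Subtype.coe_lt_coe, OrderIso.lt_symm_apply, ← Subtype.coe_lt_coe, coe_erlangBOrderIso,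
    Ici.coe_bot, erlangB_zero hM]

end ErlangB

instance (a b : ℝ) : PreconnectedSpace (Ico a b) :=
  Subtype.preconnectedSpace isPreconnected_Ico

theorem existsUnique_sum_orderIso_symm_eq {ι β : Type*} [Fintype ι] [Nonempty ι] [LinearOrder β]
    [TopologicalSpace β] [OrderTopology β] [PreconnectedSpace β] (e : ι → Ici (0 : ℝ) ≃o β)
    {c : ℝ} (hc : 0 ≤ c) : ∃! b, ∑ i, ((e i).symm b : ℝ) = c := by
  obtain ⟨i₀⟩ := ‹Nonempty ι›
  set g : β → ℝ := fun b => ∑ i, ((e i).symm b : ℝ)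
  have g_strictMono : StrictMono g := fun b b' hbb' =>
    sum_lt_sum_of_nonempty univ_nonempty fun i _ => (e i).symm.strictMono hbb'
  have g_continuous : Continuous g :=
    continuous_finsetSum _ fun i _ => continuous_subtype_val.comp (e i).symm.continuous
  have g_bot : g (e i₀ ⊥) ≤ c := by
    refine (sum_nonpos fun i _ => ?_).trans hc
    change _ ≤ ((⊥ : Ici (0 : ℝ)) : ℝ)
    rw [Subtype.coe_le_coe, OrderIso.symm_apply_le, ← OrderIso.le_symm_apply]
    exact bot_le
  have g_top : c ≤ g (e i₀ ⟨c, hc⟩) := by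
    simpa using single_le_sum (f := fun i => ((e i).symm (e i₀ ⟨c, hc⟩) : ℝ))
      (fun i _ => ((e i).symm _).2) (mem_univ i₀)
  obtain ⟨b, hb⟩ := intermediate_value_univ _ _ g_continuous ⟨g_bot, g_top⟩
  exact ⟨b, hb, fun b' hb' => g_strictMono.injective (hb'.trans hb.symm)⟩

section Wardrop

variable {k : ℕ} {N : Fin k → ℕ} (hN : ∀ i, 0 < N i) {μ Λ : ℝ}

theorem isWardropEquilibrium_of_sum_symm_eq (hμ : 0 < μ) (hΛ : 0 < Λ) {b : Ico (0 : ℝ) 1}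
    (hb : ∑ i, ((erlangBOrderIso (hN i)).symm b : ℝ) = Λ / μ) :
    IsWardropEquilibrium k N μ Λ fun i => μ * (erlangBOrderIso (hN i)).symm b := by
  obtain ⟨i, -, hi⟩ := exists_lt_of_sum_lt (s := univ) (f := 0)
    (g := fun i => ((erlangBOrderIso (hN i)).symm b : ℝ)) (by simpa [hb] using div_pos hΛ hμ)
  have hb_pos : 0 < (b : ℝ) := (erlangBOrderIso_symm_pos_iff (hN i) b).1 hi
  refine ⟨fun i => mul_pos hμ ((erlangBOrderIso_symm_pos_iff (hN i) b).2 hb_pos), ?_, ?_⟩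
  · rw [← mul_sum, hb, mul_div_cancel₀ _ hμ.ne']
  · simp only [mul_div_cancel_left₀ _ hμ.ne', erlangB_erlangBOrderIso_symm, implies_true]

theorem IsWardropEquilibrium.exists_sum_symm_eq [Nonempty (Fin k)] (hμ : 0 < μ)
    {lam : Fin k → ℝ} (h : IsWardropEquilibrium k N μ Λ lam) :
    ∃ b : Ico (0 : ℝ) 1, ∑ i, ((erlangBOrderIso (hN i)).symm b : ℝ) = Λ / μ ∧
      lam = fun i => μ * (erlangBOrderIso (hN i)).symm b := by
  obtain ⟨hpos, hsum, hB⟩ := h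
  obtain ⟨i₀⟩ := ‹Nonempty (Fin k)›
  have hload (i : Fin k) : 0 ≤ lam i / μ := (div_pos (hpos i) hμ).le
  set b := erlangBOrderIso (hN i₀) ⟨lam i₀ / μ, hload i₀⟩
  have hsymm (i : Fin k) : ((erlangBOrderIso (hN i)).symm b : ℝ) = lam i / μ := by
    rw [(OrderIso.symm_apply_eq _ (x := ⟨lam i / μ, hload i⟩)).2 (Subtype.ext (hB i₀ i))]
  refine ⟨b, ?_, funext fun i => ?_⟩
  · simp only [hsymm, ← sum_div, hsum]
  · rw [hsymm, mul_div_cancel₀ _ hμ.ne']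

end Wardrop

/-- Existence and uniqueness of the Wardrop equilibrium: for any service capacities
`N₁, …, N_k ∈ ℕ` with `Nᵢ ≥ 1`, any total arrival rate `Λ > 0` and any mean service
rate `μ > 0`, there exists a unique Wardrop equilibrium. -/
theorem wardrop_existence_uniqueness (k : ℕ) (hk : 1 ≤ k) (N : Fin k → ℕ)
    (hN : ∀ i, 1 ≤ N i) (Λ μ : ℝ) (hΛ : 0 < Λ) (hμ : 0 < μ) :
    ∃! lam : Fin k → ℝ, IsWardropEquilibrium k N μ Λ lam := by
  have : Nonempty (Fin k) := ⟨⟨0, hk⟩⟩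
  obtain ⟨b, hb, hb_unique⟩ :=
    existsUnique_sum_orderIso_symm_eq (fun i => erlangBOrderIso (hN i)) (div_pos hΛ hμ).le
  refine ⟨_, isWardropEquilibrium_of_sum_symm_eq hN hμ hΛ hb, fun lam hlam => ?_⟩
  obtain ⟨b', hb', rfl⟩ := hlam.exists_sum_symm_eq hN hμ
  rw [hb_unique b' hb']
end

section
/- Economies of scale from a merger under the Wardrop equilibrium: fix k ≥ 3, service capacities N₁, …, N_k ∈ ℕ (each ≥ 1), Λ > 0 and μ > 0. Let λ = (λ₁, …, λ_k) be the Wardrop equilibrium for capacities (N₁, …, N_k), and let λ' = (λ'₁, …, λ'_{k−1}) be the Wardrop equilibrium for the capacities (N₁ + N₂, N₃, …, N_k) obtained by merging the first two coalitions. Then λ'₁ > λ₁ + λ₂. -/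
/-!
The reciprocal `1 / B(M, a) = ∑_{i ≤ M} M^{(i)} a^{-i}` (descending factorials) is decreasing in
the load `a`. Since `M^{(i)} / M^i = ∏_{j < i} (1 - j / M)` increases with `M`, scaling servers
and load by a common factor `K / M > 1` increases every term and adds new ones, so `B` strictly
drops. If `B(M, a) = B(N, b)` and, say, `b / N ≤ a / M`, then `a + b ≤ (M + N) a / M`, hence
`B(M + N, a + b) < B(M, a)`. So if `λ'₁ ≤ λ₁ + λ₂`, the blocking probability of the new
equilibrium is lower than that of the old one, every unmerged coalition receives strictly less
traffic, and the rates cannot add up to `Λ`.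
-/

open Finset

noncomputable def erlangBRecip (M : ℕ) (a : ℝ) : ℝ :=
  ∑ i ∈ range (M + 1), (M.descFactorial i : ℝ) * a⁻¹ ^ i

theorem erlangBRecip_eq {a : ℝ} (ha : a ≠ 0) (M : ℕ) :
    erlangBRecip M a = (∑ j ∈ range (M + 1), a ^ j / j.factorial) * (M.factorial / a ^ M) := by
  rw [sum_mul, erlangBRecip]
  conv_rhs => rw [← sum_range_reflect]
  refine sum_congr rfl fun i hi => ?_
  have hiM : i ≤ M := Nat.lt_succ_iff.mp (mem_range.mp hi)
  rw [show M + 1 - 1 - i = M - i by omega, pow_sub₀ a ha hiM,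
    ← Nat.factorial_mul_descFactorial hiM]
  push_cast
  rw [inv_pow]
  field_simp

theorem erlangB_eq_inv_erlangBRecip {a : ℝ} (ha : a ≠ 0) (M : ℕ) :
    ErlangB M a = (erlangBRecip M a)⁻¹ := by
  rw [erlangBRecip_eq ha, ErlangB, mul_inv, inv_div, div_eq_mul_inv, mul_comm]

theorem erlangBRecip_pos {a : ℝ} (ha : 0 < a) (M : ℕ) : 0 < erlangBRecip M a :=
  sum_pos' (fun i _ => by positivity) ⟨0, by simp⟩

theorem erlangBRecip_antitoneOn (M : ℕ) : AntitoneOn (erlangBRecip M) (Set.Ioi 0) :=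
  fun _ ha _ hb hab => sum_le_sum fun i _ =>
    mul_le_mul_of_nonneg_left (pow_le_pow_left₀ (inv_nonneg.2 (le_of_lt hb)) (inv_anti₀ ha hab) i)
      (Nat.cast_nonneg _)

theorem erlangB_monotoneOn (M : ℕ) : MonotoneOn (ErlangB M) (Set.Ioi 0) := by
  intro a ha b hb hab
  rw [erlangB_eq_inv_erlangBRecip (ne_of_gt ha), erlangB_eq_inv_erlangBRecip (ne_of_gt hb)]
  exact inv_anti₀ (erlangBRecip_pos hb M) (erlangBRecip_antitoneOn M ha hb hab)

theorem Nat.descFactorial_mul_pow_le {M K : ℕ} (hMK : M ≤ K) (i : ℕ) :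
    M.descFactorial i * K ^ i ≤ K.descFactorial i * M ^ i := by
  induction i with
  | zero => simp
  | succ i ih =>
    have hstep : (M - i) * K ≤ (K - i) * M := by
      rw [Nat.sub_mul, Nat.sub_mul, mul_comm M K]
      exact Nat.sub_le_sub_left (Nat.mul_le_mul_left i hMK) _
    calc M.descFactorial (i + 1) * K ^ (i + 1)
        = ((M - i) * K) * (M.descFactorial i * K ^ i) := by
          rw [Nat.descFactorial_succ]; ring
      _ ≤ ((K - i) * M) * (K.descFactorial i * M ^ i) := Nat.mul_le_mul hstep ih
      _ = K.descFactorial (i + 1) * M ^ (i + 1) := by rw [Nat.descFactorial_succ]; ring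

theorem erlangBRecip_lt_scale {M K : ℕ} (hM : 0 < M) (hMK : M < K) {a : ℝ} (ha : 0 < a) :
    erlangBRecip M a < erlangBRecip K (K * a / M) := by
  set x := (K * a)⁻¹ with hx
  set f : ℕ → ℝ := fun i => K.descFactorial i * (K * a / M)⁻¹ ^ i
  have hK : (0 : ℝ) < K := by exact_mod_cast hM.trans hMK
  -- with `x = 1 / (K a)` the `i`-th terms become `M^{(i)} K^i x^i` and `K^{(i)} M^i x^i`
  have hterm : ∀ i, (M.descFactorial i : ℝ) * a⁻¹ ^ i ≤ f i := fun i => by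
    have hax : a⁻¹ = K * x := by rw [hx, mul_inv, ← mul_assoc, mul_inv_cancel₀ hK.ne', one_mul]
    have hMx : (K * a / M)⁻¹ = M * x := by rw [hx, inv_div, div_eq_mul_inv]
    calc (M.descFactorial i : ℝ) * a⁻¹ ^ i = ((M.descFactorial i * K ^ i : ℕ) : ℝ) * x ^ i := by
          rw [hax]; push_cast; ring
      _ ≤ ((K.descFactorial i * M ^ i : ℕ) : ℝ) * x ^ i := by
          gcongr ?_ * _
          exact_mod_cast Nat.descFactorial_mul_pow_le hMK.le i
      _ = f i := by simp only [f, hMx]; push_cast; ring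
  have hfK : 0 < f K := by
    simp only [f, Nat.descFactorial_self]
    positivity
  calc erlangBRecip M a ≤ ∑ i ∈ range (M + 1), f i := sum_le_sum fun i _ => hterm i
    _ < ∑ i ∈ range (K + 1), f i :=
        sum_lt_sum_of_subset (range_subset_range.2 (by omega)) (self_mem_range_succ K)
          (by simpa using hMK) hfK (fun j _ _ => by positivity)

theorem erlangBRecip_lt_merge_of_div_le {M N : ℕ} (hM : 0 < M) (hN : 0 < N) {a b : ℝ}
    (ha : 0 < a) (hb : 0 < b) (hab : b / N ≤ a / M) :
    erlangBRecip M a < erlangBRecip (M + N) (a + b) := by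
  have hMR : (0 : ℝ) < M := by exact_mod_cast hM
  have hNR : (0 : ℝ) < N := by exact_mod_cast hN
  have hload : a + b ≤ (M + N : ℕ) * a / M := by
    rw [div_le_div_iff₀ hNR hMR] at hab
    rw [le_div_iff₀ hMR]
    push_cast
    nlinarith
  calc erlangBRecip M a < erlangBRecip (M + N) ((M + N : ℕ) * a / M) :=
        erlangBRecip_lt_scale hM (by omega) ha
    _ ≤ erlangBRecip (M + N) (a + b) :=
        erlangBRecip_antitoneOn _ (Set.mem_Ioi.2 (add_pos ha hb)) (Set.mem_Ioi.2 (by positivity))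
          hload

theorem erlangBRecip_lt_merge {M N : ℕ} (hM : 0 < M) (hN : 0 < N) {a b : ℝ}
    (ha : 0 < a) (hb : 0 < b) (h : erlangBRecip M a = erlangBRecip N b) :
    erlangBRecip M a < erlangBRecip (M + N) (a + b) := by
  rcases le_total (b / N) (a / M) with hab | hab
  · exact erlangBRecip_lt_merge_of_div_le hM hN ha hb hab
  · rw [h, add_comm M, add_comm a]
    exact erlangBRecip_lt_merge_of_div_le hN hM hb ha hab

theorem erlangB_merge_lt {M N : ℕ} (hM : 0 < M) (hN : 0 < N) {a b : ℝ}
    (ha : 0 < a) (hb : 0 < b) (h : ErlangB M a = ErlangB N b) :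
    ErlangB (M + N) (a + b) < ErlangB M a := by
  rw [erlangB_eq_inv_erlangBRecip ha.ne', erlangB_eq_inv_erlangBRecip hb.ne', inv_inj] at h
  rw [erlangB_eq_inv_erlangBRecip (add_pos ha hb).ne', erlangB_eq_inv_erlangBRecip ha.ne']
  exact inv_strictAnti₀ (erlangBRecip_pos ha M) (erlangBRecip_lt_merge hM hN ha hb h)

theorem wardrop_merger_economies_of_scale_general (m : ℕ) (hm : 1 ≤ m)
    (N : Fin (m + 2) → ℕ) (hN : ∀ i, 1 ≤ N i) (Λ μ : ℝ) (hμ : 0 < μ)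
    (lam : Fin (m + 2) → ℝ) (lam' : Fin (m + 1) → ℝ)
    (h : IsWardropEquilibrium (m + 2) N μ Λ lam)
    (h' : IsWardropEquilibrium (m + 1)
      (Fin.cons (N 0 + N 1) (fun i : Fin m => N i.succ.succ)) μ Λ lam') :
    lam 0 + lam 1 < lam' 0 := by
  obtain ⟨hpos, hsum, hB⟩ := h
  obtain ⟨hpos', hsum', hB'⟩ := h'
  have hload {x : ℝ} (hx : 0 < x) : x / μ ∈ Set.Ioi 0 := div_pos hx hμ
  by_contra! hle
  have hdrop : ErlangB (N 0 + N 1) (lam' 0 / μ) < ErlangB (N 0) (lam 0 / μ) := calc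
    _ ≤ ErlangB (N 0 + N 1) ((lam 0 + lam 1) / μ) :=
        erlangB_monotoneOn _ (hload (hpos' 0)) (hload (add_pos (hpos 0) (hpos 1)))
          (div_le_div_of_nonneg_right hle hμ.le)
    _ < ErlangB (N 0) (lam 0 / μ) := by
        rw [add_div]
        exact erlangB_merge_lt (hN 0) (hN 1) (hload (hpos 0)) (hload (hpos 1)) (hB 0 1)
  have hrest (i : Fin m) : lam' i.succ < lam i.succ.succ := by
    have hB'i := hB' i.succ 0
    simp only [Fin.cons_succ, Fin.cons_zero] at hB'i
    have hlt : ErlangB (N i.succ.succ) (lam' i.succ / μ)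
        < ErlangB (N i.succ.succ) (lam i.succ.succ / μ) := by
      rwa [hB'i, hB i.succ.succ 0]
    exact (div_lt_div_iff_of_pos_right hμ).1
      ((erlangB_monotoneOn _).reflect_lt (hload (hpos' _)) (hload (hpos _)) hlt)
  have hsum_lt : ∑ i : Fin m, lam' i.succ < ∑ i : Fin m, lam i.succ.succ :=
    sum_lt_sum_of_nonempty ⟨⟨0, hm⟩, mem_univ _⟩ fun i _ => hrest i
  rw [Fin.sum_univ_succ] at hsum'
  rw [Fin.sum_univ_succ, Fin.sum_univ_succ, Fin.succ_zero_eq_one] at hsum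
  linarith

/-- Economies of scale from a merger under the Wardrop equilibrium: with `k = m + 2 ≥ 3`
coalitions of capacities `N₀, …, N_{k-1}` (each `≥ 1`), total arrival rate `Λ > 0` and
service rate `μ > 0`, let `λ` be the Wardrop equilibrium for `(N₀, …, N_{k-1})` and `λ'`
the Wardrop equilibrium for the `k - 1` capacities `(N₀ + N₁, N₂, …, N_{k-1})` obtained
by merging the first two coalitions.  Then `λ'₀ > λ₀ + λ₁`. -/
theorem wardrop_merger_economies_of_scale (m : ℕ) (hm : 1 ≤ m)
    (N : Fin (m + 2) → ℕ) (hN : ∀ i, 1 ≤ N i) (Λ μ : ℝ) (hΛ : 0 < Λ) (hμ : 0 < μ)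
    (lam : Fin (m + 2) → ℝ) (lam' : Fin (m + 1) → ℝ)
    (h : IsWardropEquilibrium (m + 2) N μ Λ lam)
    (h' : IsWardropEquilibrium (m + 1)
      (Fin.cons (N 0 + N 1) (fun i : Fin m => N i.succ.succ)) μ Λ lam') :
    lam 0 + lam 1 < lam' 0 :=
  wardrop_merger_economies_of_scale_general m hm N hN Λ μ hμ lam lam' h h'
end

section
/- Light-traffic limit of the Wardrop split in a duopoly: let N, k ∈ ℕ with N/2 < k ≤ N − 1 (so the first coalition has k servers and the second has N − k ≥ 1 servers, with k > N − k). For each Λ > 0 let λ₁(Λ) be the unique number in (0, Λ) satisfying B(k, λ₁(Λ)) = B(N − k, Λ − λ₁(Λ)). Then λ₁(Λ)/Λ → 1 as Λ → 0⁺, i.e. the larger coalition captures asymptotically the entire market in light traffic. -/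
open Filter

lemma erlang_denom_ge_one (M : ℕ) {a : ℝ} (ha : 0 ≤ a) :
    1 ≤ ∑ j ∈ Finset.range (M + 1), a ^ j / (Nat.factorial j : ℝ) := by
  have h0 : (1:ℝ) = a ^ 0 / (Nat.factorial 0 : ℝ) := by simp
  rw [h0]
  apply Finset.single_le_sum (f := fun j => a ^ j / (Nat.factorial j : ℝ))
  · intro i _
    positivity
  · simp

lemma erlang_denom_le_three (M : ℕ) {a : ℝ} (ha : 0 ≤ a) (ha1 : a ≤ 1) :
    ∑ j ∈ Finset.range (M + 1), a ^ j / (Nat.factorial j : ℝ) ≤ 3 := by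
  calc ∑ j ∈ Finset.range (M + 1), a ^ j / (Nat.factorial j : ℝ)
      ≤ Real.exp a := Real.sum_le_exp_of_nonneg ha _
    _ ≤ Real.exp 1 := Real.exp_le_exp.mpr ha1
    _ ≤ 3 := by
        have := Real.exp_one_lt_d9
        linarith

lemma erlangB_le (M : ℕ) {a : ℝ} (ha : 0 ≤ a) : ErlangB M a ≤ a ^ M := by
  unfold ErlangB
  have h1 := erlang_denom_ge_one M ha
  have hM : (1:ℝ) ≤ (Nat.factorial M : ℝ) := by
    exact_mod_cast Nat.one_le_iff_ne_zero.mpr (Nat.factorial_ne_zero M)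
  have hnum : 0 ≤ a ^ M := by positivity
  calc (a ^ M / (Nat.factorial M : ℝ)) / (∑ j ∈ Finset.range (M + 1), a ^ j / (Nat.factorial j : ℝ))
      ≤ (a ^ M / (Nat.factorial M : ℝ)) / 1 := by
        apply div_le_div_of_nonneg_left _ one_pos h1
        positivity
    _ = a ^ M / (Nat.factorial M : ℝ) := by ring
    _ ≤ a ^ M / 1 := by
        apply div_le_div_of_nonneg_left hnum one_pos hM
    _ = a ^ M := by ring

lemma erlangB_ge (M : ℕ) {a : ℝ} (ha : 0 ≤ a) (ha1 : a ≤ 1) :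
    a ^ M / (Nat.factorial M : ℝ) / 3 ≤ ErlangB M a := by
  unfold ErlangB
  apply div_le_div_of_nonneg_left (by positivity)
    (lt_of_lt_of_le one_pos (erlang_denom_ge_one M ha)) (erlang_denom_le_three M ha ha1)

/-- Light-traffic limit of the Wardrop split in a duopoly: let `N, k ∈ ℕ` with
`N/2 < k ≤ N − 1`.  For each `Λ > 0` let `λ₁(Λ)` be the (unique) number in `(0, Λ)`
satisfying `B(k, λ₁(Λ)) = B(N − k, Λ − λ₁(Λ))`.  Then `λ₁(Λ)/Λ → 1` as `Λ → 0⁺`. -/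
theorem wardrop_duopoly_light_traffic (N k : ℕ)
    (hk₁ : (N : ℝ) / 2 < (k : ℝ)) (hk₂ : k + 1 ≤ N)
    (lam₁ : ℝ → ℝ)
    (hlam : ∀ Λ : ℝ, 0 < Λ → lam₁ Λ ∈ Set.Ioo 0 Λ ∧
      ErlangB k (lam₁ Λ) = ErlangB (N - k) (Λ - lam₁ Λ)) :
    Tendsto (fun Λ => lam₁ Λ / Λ) (nhdsWithin 0 (Set.Ioi 0)) (nhds 1) := by
  set m : ℕ := N - k with hm
  have hNk : N < 2 * k := by
    have : (N : ℝ) < 2 * k := by linarith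
    exact_mod_cast this
  have hm1 : 1 ≤ m := by omega
  have hmk : m < k := by omega
  have hkm : k = (k - m) + m := by omega
  have hkm1 : 1 ≤ k - m := by omega
  have hmfac : (0:ℝ) < (Nat.factorial m : ℝ) := by
    exact_mod_cast Nat.factorial_pos m
  rw [Metric.tendsto_nhdsWithin_nhds]
  intro ε hε
  set ε' : ℝ := min ε 1 with hε'def
  have hε'pos : 0 < ε' := lt_min hε one_pos
  have hε'1 : ε' ≤ 1 := min_le_right _ _
  refine ⟨min 1 (ε' ^ m / (3 * (Nat.factorial m : ℝ))), lt_min one_pos (by positivity), ?_⟩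
  intro Λ hΛ hdist
  rw [Real.dist_eq]
  have hΛpos : (0:ℝ) < Λ := hΛ
  rw [Real.dist_eq, sub_zero, abs_of_pos hΛpos] at hdist
  have hΛ1 : Λ ≤ 1 := le_of_lt (lt_of_lt_of_le hdist (min_le_left _ _))
  have hΛsmall : Λ < ε' ^ m / (3 * (Nat.factorial m : ℝ)) :=
    lt_of_lt_of_le hdist (min_le_right _ _)
  obtain ⟨⟨hl0, hlΛ⟩, heq⟩ := hlam Λ hΛpos
  set l := lam₁ Λ
  set l2 := Λ - l with hl2def
  have hl20 : 0 < l2 := by simp [hl2def]; linarith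
  have hl21 : l2 ≤ 1 := by simp [hl2def]; linarith
  -- key bound : l2 ^ m ≤ 3 * m! * Λ ^ k
  have hkey : l2 ^ m ≤ 3 * (Nat.factorial m : ℝ) * Λ ^ k := by
    have h1 : l2 ^ m / (Nat.factorial m : ℝ) / 3 ≤ ErlangB m l2 :=
      erlangB_ge m hl20.le hl21
    have h2 : ErlangB k l ≤ l ^ k := erlangB_le k hl0.le
    have h3 : l ^ k ≤ Λ ^ k := pow_le_pow_left₀ hl0.le hlΛ.le k
    have := h1.trans (heq ▸ h2.trans h3 : ErlangB m l2 ≤ Λ ^ k)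
    rw [div_le_iff₀ (by norm_num : (0:ℝ) < 3)] at this
    rw [div_le_iff₀ hmfac] at this
    nlinarith
  -- show l2 < ε' * Λ
  have hl2small : l2 < ε' * Λ := by
    by_contra h
    push_neg at h
    have hpow : (ε' * Λ) ^ m ≤ l2 ^ m := pow_le_pow_left₀ (by positivity) h m
    have hΛk : Λ ^ k = Λ ^ (k - m) * Λ ^ m := by
      rw [← pow_add, Nat.sub_add_cancel hmk.le]
    have hΛkm : Λ ^ (k - m) ≤ Λ := pow_le_of_le_one hΛpos.le hΛ1 (by omega)
    have hε'm : ε' ^ m * Λ ^ m ≤ 3 * (Nat.factorial m : ℝ) * (Λ ^ (k - m) * Λ ^ m) := by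
      rw [← hΛk]
      calc ε' ^ m * Λ ^ m = (ε' * Λ) ^ m := (mul_pow _ _ _).symm
        _ ≤ l2 ^ m := hpow
        _ ≤ 3 * (Nat.factorial m : ℝ) * Λ ^ k := hkey
    have hΛmpos : 0 < Λ ^ m := by positivity
    have h4 : ε' ^ m ≤ 3 * (Nat.factorial m : ℝ) * Λ ^ (k - m) := by
      have h := hε'm
      rw [← mul_assoc] at h
      exact le_of_mul_le_mul_right h hΛmpos
    have h5 : 3 * (Nat.factorial m : ℝ) * Λ ^ (k - m) ≤ 3 * (Nat.factorial m : ℝ) * Λ := by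
      apply mul_le_mul_of_nonneg_left hΛkm (by positivity)
    have h6 : 3 * (Nat.factorial m : ℝ) * Λ < ε' ^ m := by
      have := (lt_div_iff₀ (by positivity : (0:ℝ) < 3 * (Nat.factorial m : ℝ))).mp hΛsmall
      linarith
    linarith
  have habs : |l / Λ - 1| = l2 / Λ := by
    have h1 : l / Λ - 1 ≤ 0 := by rw [sub_nonpos, div_le_one hΛpos]; linarith
    rw [abs_of_nonpos h1, hl2def, sub_div, div_self hΛpos.ne']
    ring
  rw [habs]
  calc l2 / Λ < (ε' * Λ) / Λ := (div_lt_div_iff_of_pos_right hΛpos).mpr hl2small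
    _ = ε' := by field_simp
    _ ≤ ε := min_le_left _ _
end

section
/- Heavy-traffic limit of the Wardrop split in a duopoly: let N, k ∈ ℕ with N/2 ≤ k ≤ N − 1. For each Λ > 0 let λ₁(Λ) be the unique number in (0, Λ) satisfying B(k, λ₁(Λ)) = B(N − k, Λ − λ₁(Λ)). Then λ₁(Λ)/Λ → k/N as Λ → ∞, i.e. in heavy traffic each coalition's market share is asymptotically proportional to its service capacity. -/
/-!
Write `1 / B(M, a) = 1 + g_M(a)`. The Erlang-B recursion gives
`g_{M+1}(a) = (M + 1) / a · (1 + g_M(a))`, so `g_M` is positive and decreasing on `(0, ∞)`,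
`g_M(a) ≥ M / a`, and `a · g_M(a) → M` as `a → ∞`.
A Wardrop split equalises `c(Λ) := g_k(λ₁) = g_{N-k}(Λ - λ₁)`. One of the two loads is at least
`Λ / 2`, so `c(Λ) → 0`, and then `λ₁ ≥ k / c(Λ)` and `Λ - λ₁ ≥ (N - k) / c(Λ)` both tend to
infinity. Hence `λ₁ · c(Λ) → k` and `(Λ - λ₁) · c(Λ) → N - k`, and their ratio gives
`λ₁ / Λ → k / N`.
-/

open Filter

open Topology Finset

/-- `erlangOdds M a = 1 / B(M, a) - 1`, defined through the Erlang-B recursion. -/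
noncomputable def erlangOdds : ℕ → ℝ → ℝ
  | 0, _ => 0
  | M + 1, a => (M + 1) / a * (1 + erlangOdds M a)

namespace erlangOdds

@[simp]
lemma zero_apply (a : ℝ) : erlangOdds 0 a = 0 := rfl

lemma succ_apply (M : ℕ) (a : ℝ) :
    erlangOdds (M + 1) a = (M + 1) / a * (1 + erlangOdds M a) := rfl

lemma nonneg (M : ℕ) {a : ℝ} (ha : 0 ≤ a) : 0 ≤ erlangOdds M a := by
  induction M with
  | zero => simp
  | succ M ih => exact mul_nonneg (by positivity) (by linarith)

lemma div_le (M : ℕ) {a : ℝ} (ha : 0 < a) : M / a ≤ erlangOdds M a := by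
  cases M with
  | zero => simp
  | succ M =>
    rw [succ_apply]
    push_cast
    exact le_mul_of_one_le_right (by positivity) (by linarith [nonneg M ha.le])

lemma pos {M : ℕ} (hM : M ≠ 0) {a : ℝ} (ha : 0 < a) : 0 < erlangOdds M a :=
  (div_pos (Nat.cast_pos.2 (Nat.pos_of_ne_zero hM)) ha).trans_le (div_le M ha)

lemma antitoneOn (M : ℕ) : AntitoneOn (erlangOdds M) (Set.Ioi 0) := by
  induction M with
  | zero => intro x _ y _ _; simp
  | succ M ih =>
    intro x hx y hy hxy
    simp only [succ_apply]
    have hx' : 0 < x := hx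
    have := nonneg M (le_of_lt hy)
    gcongr
    exact ih hx hy hxy

end erlangOdds

lemma sum_range_succ_pow_div_factorial_eq (M : ℕ) {a : ℝ} (ha : a ≠ 0) :
    ∑ j ∈ range (M + 1), a ^ j / (j.factorial : ℝ) =
      a ^ M / (M.factorial : ℝ) * (1 + erlangOdds M a) := by
  induction M with
  | zero => simp
  | succ M ih =>
    rw [sum_range_succ, ih, erlangOdds.succ_apply, Nat.factorial_succ]
    push_cast
    field_simp
    ring

lemma erlangB_eq_inv (M : ℕ) {a : ℝ} (ha : a ≠ 0) : ErlangB M a = (1 + erlangOdds M a)⁻¹ := by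
  rw [ErlangB, sum_range_succ_pow_div_factorial_eq M ha, div_mul_cancel_left₀ (by positivity)]

lemma erlangB_eq_erlangB_iff {M₁ M₂ : ℕ} {x y : ℝ} (hx : x ≠ 0) (hy : y ≠ 0) :
    ErlangB M₁ x = ErlangB M₂ y ↔ erlangOdds M₁ x = erlangOdds M₂ y := by
  rw [erlangB_eq_inv M₁ hx, erlangB_eq_inv M₂ hy, inv_inj, add_right_inj]

lemma tendsto_erlangOdds_atTop (M : ℕ) : Tendsto (erlangOdds M) atTop (𝓝 0) := by
  induction M with
  | zero => exact tendsto_const_nhds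
  | succ M ih =>
    have h := (tendsto_const_nhds (x := ((M : ℝ) + 1))).div_atTop tendsto_id
    have := h.mul (ih.const_add 1)
    rwa [zero_mul] at this

lemma tendsto_mul_erlangOdds_atTop (M : ℕ) :
    Tendsto (fun a => a * erlangOdds M a) atTop (𝓝 M) := by
  cases M with
  | zero => simp
  | succ M =>
    have h := ((tendsto_erlangOdds_atTop M).const_add 1).const_mul ((M : ℝ) + 1)
    rw [add_zero, mul_one] at h
    push_cast
    refine h.congr' ?_
    filter_upwards [eventually_ne_atTop 0] with a ha
    rw [erlangOdds.succ_apply]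
    field_simp

section Split

variable {ι : Type*} {l : Filter ι} {u v : ι → ℝ} {M₁ M₂ : ℕ}

lemma tendsto_erlangOdds_of_eq (hu : ∀ᶠ t in l, 0 < u t) (hv : ∀ᶠ t in l, 0 < v t)
    (hsum : Tendsto (fun t => u t + v t) l atTop)
    (heq : ∀ᶠ t in l, erlangOdds M₁ (u t) = erlangOdds M₂ (v t)) :
    Tendsto (fun t => erlangOdds M₁ (u t)) l (𝓝 0) := by
  have hhalf : Tendsto (fun t => (u t + v t) / 2) l atTop := hsum.atTop_div_const two_pos
  have hmax := ((tendsto_erlangOdds_atTop M₁).comp hhalf).max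
    ((tendsto_erlangOdds_atTop M₂).comp hhalf)
  rw [max_self] at hmax
  refine tendsto_of_tendsto_of_tendsto_of_le_of_le' tendsto_const_nhds hmax ?_ ?_
  · filter_upwards [hu] with t ht using erlangOdds.nonneg M₁ ht.le
  · filter_upwards [hu, hv, heq] with t hut hvt het
    have hhalf_pos : (0 : ℝ) < (u t + v t) / 2 := by positivity
    rcases le_total ((u t + v t) / 2) (u t) with h | h
    · exact le_max_of_le_left (erlangOdds.antitoneOn M₁ hhalf_pos hut h)
    · rw [het]
      exact le_max_of_le_right (erlangOdds.antitoneOn M₂ hhalf_pos hvt (by linarith))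

lemma tendsto_atTop_of_erlangOdds_eq (hM₁ : M₁ ≠ 0) (hu : ∀ᶠ t in l, 0 < u t)
    (hv : ∀ᶠ t in l, 0 < v t) (hsum : Tendsto (fun t => u t + v t) l atTop)
    (heq : ∀ᶠ t in l, erlangOdds M₁ (u t) = erlangOdds M₂ (v t)) :
    Tendsto u l atTop := by
  have hc : Tendsto (fun t => erlangOdds M₁ (u t)) l (𝓝[>] 0) :=
    tendsto_nhdsWithin_iff.2 ⟨tendsto_erlangOdds_of_eq hu hv hsum heq,
      by filter_upwards [hu] with t ht using erlangOdds.pos hM₁ ht⟩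
  refine tendsto_atTop_mono' l ?_
    (hc.inv_tendsto_nhdsGT_zero.const_mul_atTop (Nat.cast_pos.2 (Nat.pos_of_ne_zero hM₁)))
  filter_upwards [hu] with t ht
  have hle := erlangOdds.div_le M₁ ht
  rw [div_le_iff₀ ht] at hle
  rw [Pi.inv_apply, ← div_eq_mul_inv, div_le_iff₀ (erlangOdds.pos hM₁ ht), mul_comm]
  exact hle

lemma tendsto_div_add_of_erlangOdds_eq (hM₁ : M₁ ≠ 0) (hM₂ : M₂ ≠ 0)
    (hu : ∀ᶠ t in l, 0 < u t) (hv : ∀ᶠ t in l, 0 < v t)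
    (hsum : Tendsto (fun t => u t + v t) l atTop)
    (heq : ∀ᶠ t in l, erlangOdds M₁ (u t) = erlangOdds M₂ (v t)) :
    Tendsto (fun t => u t / (u t + v t)) l (𝓝 (M₁ / (M₁ + M₂))) := by
  have hu_top := tendsto_atTop_of_erlangOdds_eq hM₁ hu hv hsum heq
  have hv_top := tendsto_atTop_of_erlangOdds_eq hM₂ hv hu (by simpa only [add_comm] using hsum)
    (heq.mono fun _ h => h.symm)
  have h₁ := (tendsto_mul_erlangOdds_atTop M₁).comp hu_top
  have h₂ := (tendsto_mul_erlangOdds_atTop M₂).comp hv_top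
  refine (h₁.div (h₁.add h₂) (by norm_cast; omega)).congr' ?_
  filter_upwards [hu, heq] with t ht het
  simp only [Pi.div_apply, Function.comp_apply]
  rw [← het, ← add_mul, mul_div_mul_right _ _ (erlangOdds.pos hM₁ ht).ne']

end Split

/-- Heavy-traffic limit of the Wardrop split in a duopoly: let `N, k ∈ ℕ` with
`N/2 ≤ k ≤ N − 1`.  For each `Λ > 0` let `λ₁(Λ)` be the (unique) number in `(0, Λ)`
satisfying `B(k, λ₁(Λ)) = B(N − k, Λ − λ₁(Λ))`.  Then `λ₁(Λ)/Λ → k/N` as `Λ → ∞`. -/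
theorem wardrop_duopoly_heavy_traffic (N k : ℕ)
    (hk₁ : (N : ℝ) / 2 ≤ (k : ℝ)) (hk₂ : k + 1 ≤ N)
    (lam₁ : ℝ → ℝ)
    (hlam : ∀ Λ : ℝ, 0 < Λ → lam₁ Λ ∈ Set.Ioo 0 Λ ∧
      ErlangB k (lam₁ Λ) = ErlangB (N - k) (Λ - lam₁ Λ)) :
    Tendsto (fun Λ => lam₁ Λ / Λ) atTop (nhds ((k : ℝ) / (N : ℝ))) := by
  have hk : k ≠ 0 := by
    rintro rfl
    have hN : (0 : ℝ) < N := by exact_mod_cast (by omega : 0 < N)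
    linarith
  have hlam' := (eventually_gt_atTop 0).mono hlam
  have hu : ∀ᶠ Λ in atTop, 0 < lam₁ Λ := hlam'.mono fun _ h => h.1.1
  have hv : ∀ᶠ Λ in atTop, 0 < Λ - lam₁ Λ := hlam'.mono fun _ h => sub_pos.2 h.1.2
  have heq : ∀ᶠ Λ in atTop, erlangOdds k (lam₁ Λ) = erlangOdds (N - k) (Λ - lam₁ Λ) :=
    hlam'.mono fun _ h => (erlangB_eq_erlangB_iff h.1.1.ne' (sub_pos.2 h.1.2).ne').1 h.2
  have hsplit := tendsto_div_add_of_erlangOdds_eq hk (by omega) hu hv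
    (by simp only [add_sub_cancel]; exact tendsto_id) heq
  rw [← Nat.cast_add, Nat.add_sub_cancel' (by omega)] at hsplit
  simpa only [add_sub_cancel] using hsplit
end

section
/- Second-order heavy-traffic behaviour of the Wardrop split in a duopoly: let N, k ∈ ℕ with N/2 ≤ k ≤ N − 1. For each Λ > 0 let λ₁(Λ) be the unique number in (0, Λ) satisfying B(k, λ₁(Λ)) = B(N − k, Λ − λ₁(Λ)). Then λ₁(Λ)/k − (Λ − λ₁(Λ))/(N − k) → 1/(N − k) − 1/k as Λ → ∞. -/
open Filter

/-!
With `t = 1/a`, the reciprocal `1/B(M, a)` is the polynomial `∑ᵢ M(M-1)⋯(M-i+1) tⁱ`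
`= 1 + M t + M(M-1) t² + O(t³)`, so `a/M - (1/B(M, a) - 1)⁻¹ → 1 - 1/M` as `a → ∞`.
Along the Wardrop split both loads `λ₁` and `Λ - λ₁` tend to infinity: `B(M, ·)` increases
to `1`, while `B(k, λ₁)` stays bounded away from `1` as long as `λ₁` is bounded.
Since the two blocking probabilities are equal, the correction terms `(1/B - 1)⁻¹` cancel in
`λ₁/k - (Λ - λ₁)/(N - k)`, whose limit is therefore `(1 - 1/k) - (1 - 1/(N - k))`.
-/

open Finset Topology

noncomputable def erlangPoly (M : ℕ) (t : ℝ) : ℝ :=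
  ∑ i ∈ range (M + 1), (M.descFactorial i : ℝ) * t ^ i

theorem inv_erlangB (M : ℕ) {a : ℝ} (ha : a ≠ 0) :
    (ErlangB M a)⁻¹ = erlangPoly M a⁻¹ := by
  rw [ErlangB, inv_div, erlangPoly, ← sum_range_reflect, sum_div]
  refine sum_congr rfl fun i hi => ?_
  obtain ⟨j, rfl⟩ : ∃ j, M = j + i := ⟨M - i, by have := mem_range.mp hi; omega⟩
  rw [Nat.add_sub_cancel, Nat.add_sub_cancel,
    ← Nat.factorial_mul_descFactorial (Nat.le_add_left i j), Nat.add_sub_cancel, pow_add]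
  push_cast
  rw [inv_pow]
  field_simp

theorem erlangPoly_eq (M : ℕ) (t : ℝ) :
    erlangPoly M t =
      1 + M * t + t ^ 2 * ∑ i ∈ range (M + 1), (M.descFactorial (i + 2) : ℝ) * t ^ i := by
  have hvanish : ∀ i, M < i → (M.descFactorial i : ℝ) = 0 := fun i hi => by
    exact_mod_cast Nat.descFactorial_eq_zero_iff_lt.mpr hi
  have hext : erlangPoly M t = ∑ i ∈ range (M + 1 + 2), (M.descFactorial i : ℝ) * t ^ i := by
    rw [sum_range_succ, sum_range_succ, hvanish _ (by omega), hvanish _ (by omega)]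
    simp only [erlangPoly, zero_mul, add_zero]
  rw [hext, sum_range_succ', sum_range_succ', mul_sum]
  simp only [zero_add, Nat.descFactorial_zero, Nat.descFactorial_one, Nat.cast_one, pow_zero,
    pow_one, mul_one]
  rw [sum_congr rfl fun i _ => show (M.descFactorial (i + 1 + 1) : ℝ) * t ^ (i + 1 + 1) =
    t ^ 2 * ((M.descFactorial (i + 2) : ℝ) * t ^ i) by ring]
  ring

theorem continuous_erlangPoly (M : ℕ) : Continuous (erlangPoly M) := by
  unfold erlangPoly
  fun_prop

theorem erlangPoly_zero (M : ℕ) : erlangPoly M 0 = 1 := by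
  simp [erlangPoly_eq]

theorem one_lt_erlangPoly {M : ℕ} (hM : M ≠ 0) {t : ℝ} (ht : 0 < t) : 1 < erlangPoly M t := by
  have htail : 0 ≤ ∑ i ∈ range (M + 1), (M.descFactorial (i + 2) : ℝ) * t ^ i :=
    sum_nonneg fun i _ => by positivity
  have hM : (0 : ℝ) < M := by positivity
  rw [erlangPoly_eq]
  nlinarith [mul_pos hM ht, mul_nonneg (sq_nonneg t) htail]

theorem monotoneOn_erlangPoly (M : ℕ) : MonotoneOn (erlangPoly M) (Set.Ici 0) :=
  fun _ hs _ _ hst => sum_le_sum fun i _ =>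
    mul_le_mul_of_nonneg_left (pow_le_pow_left₀ hs hst i) (Nat.cast_nonneg _)

theorem tendsto_inv_mul_sub_inv_mul_add_sq_mul {c r : ℝ} (hc : c ≠ 0) {R : ℝ → ℝ}
    (hR : Tendsto R (𝓝[≠] 0) (𝓝 r)) :
    Tendsto (fun t => (c * t)⁻¹ - (c * t + t ^ 2 * R t)⁻¹) (𝓝[≠] 0)
      (𝓝 (r / c ^ 2)) := by
  have hden : Tendsto (fun t => c + t * R t) (𝓝[≠] 0) (𝓝 c) := by
    simpa using tendsto_const_nhds.add ((tendsto_id.mono_left nhdsWithin_le_nhds).mul hR)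
  have hlim : Tendsto (fun t => R t / (c * (c + t * R t))) (𝓝[≠] 0) (𝓝 (r / c ^ 2)) := by
    rw [sq]
    exact hR.div (tendsto_const_nhds.mul hden) (mul_ne_zero hc hc)
  refine hlim.congr' ?_
  filter_upwards [self_mem_nhdsWithin, hden.eventually_ne hc] with t (ht : t ≠ 0) hct
  rw [show c * t + t ^ 2 * R t = t * (c + t * R t) by ring, inv_eq_one_div, inv_eq_one_div,
    div_sub_div _ _ (mul_ne_zero hc ht) (mul_ne_zero ht hct),
    div_eq_div_iff (mul_ne_zero hc hct) (mul_ne_zero (mul_ne_zero hc ht) (mul_ne_zero ht hct))]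
  ring

theorem tendsto_div_sub_inv_inv_erlangB_sub_one {M : ℕ} (hM : M ≠ 0) :
    Tendsto (fun a => a / M - ((ErlangB M a)⁻¹ - 1)⁻¹) atTop (𝓝 (1 - 1 / M)) := by
  set R : ℝ → ℝ := fun t => ∑ i ∈ range (M + 1), (M.descFactorial (i + 2) : ℝ) * t ^ i
  have hR : Tendsto R (𝓝[≠] 0) (𝓝 (M * (M - 1))) := by
    have hcont : Continuous R := by fun_prop
    convert (hcont.tendsto 0).mono_left nhdsWithin_le_nhds
    rw [← Nat.cast_descFactorial_two]
    simp [R, sum_range_succ']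
  have hinv : Tendsto (fun a : ℝ => a⁻¹) atTop (𝓝[≠] 0) :=
    tendsto_inv_atTop_nhdsGT_zero.mono_right (nhdsWithin_mono _ fun _ h => (Set.mem_Ioi.mp h).ne')
  have hM' : (M : ℝ) ≠ 0 := by exact_mod_cast hM
  have hlim := (tendsto_inv_mul_sub_inv_mul_add_sq_mul hM' hR).comp hinv
  rw [show (M : ℝ) * (M - 1) / M ^ 2 = 1 - 1 / M by field_simp] at hlim
  refine hlim.congr' ?_
  filter_upwards [eventually_gt_atTop 0] with a ha
  simp only [Function.comp_apply, inv_erlangB M ha.ne', erlangPoly_eq, R]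
  rw [add_assoc, add_sub_cancel_left, mul_inv, inv_inv, div_eq_mul_inv, mul_comm]

theorem tendsto_atTop_of_erlangB_eq {k m : ℕ} (hk : k ≠ 0) {x y : ℝ → ℝ}
    (hx : ∀ Λ, 0 < Λ → 0 < x Λ) (hxy : ∀ Λ, x Λ + y Λ = Λ)
    (heq : ∀ Λ, 0 < Λ → ErlangB k (x Λ) = ErlangB m (y Λ)) : Tendsto x atTop atTop := by
  refine tendsto_atTop.2 fun C => ?_
  set C' := max C 1
  have hC' : 0 < C' := lt_max_of_lt_right one_pos
  have hgap : 1 < erlangPoly k C'⁻¹ := one_lt_erlangPoly hk (inv_pos.2 hC')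
  have hnear : ∀ᶠ z in atTop, 0 < z ∧ erlangPoly m z⁻¹ < erlangPoly k C'⁻¹ :=
    (eventually_gt_atTop 0).and <|
      (((continuous_erlangPoly m).tendsto' 0 1 (erlangPoly_zero m)).comp
        tendsto_inv_atTop_zero).eventually_lt_const hgap
  obtain ⟨D, hD⟩ := eventually_atTop.1 hnear
  filter_upwards [eventually_gt_atTop 0, eventually_ge_atTop (C' + D)] with Λ hΛ hΛD
  refine (le_max_left C 1).trans (not_lt.1 fun hlt => ?_)
  obtain ⟨hy, hfar⟩ := hD (y Λ) (by linarith [hxy Λ])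
  have hxΛ := hx Λ hΛ
  have hnotfar : erlangPoly k C'⁻¹ ≤ erlangPoly k (x Λ)⁻¹ :=
    monotoneOn_erlangPoly k (inv_pos.2 hC').le (inv_pos.2 hxΛ).le (inv_anti₀ hxΛ hlt.le)
  rw [← inv_erlangB k hxΛ.ne', heq Λ hΛ, inv_erlangB m hy.ne'] at hnotfar
  exact hfar.not_ge hnotfar

/-- Second-order heavy-traffic behaviour of the Wardrop split in a duopoly: let
`N, k ∈ ℕ` with `N/2 ≤ k ≤ N − 1`.  For each `Λ > 0` let `λ₁(Λ)` be the (unique)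
number in `(0, Λ)` satisfying `B(k, λ₁(Λ)) = B(N − k, Λ − λ₁(Λ))`.  Then
`λ₁(Λ)/k − (Λ − λ₁(Λ))/(N − k) → 1/(N − k) − 1/k` as `Λ → ∞`. -/
theorem wardrop_duopoly_heavy_traffic_second_order (N k : ℕ)
    (hk₁ : (N : ℝ) / 2 ≤ (k : ℝ)) (hk₂ : k + 1 ≤ N)
    (lam₁ : ℝ → ℝ)
    (hlam : ∀ Λ : ℝ, 0 < Λ → lam₁ Λ ∈ Set.Ioo 0 Λ ∧
      ErlangB k (lam₁ Λ) = ErlangB (N - k) (Λ - lam₁ Λ)) :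
    Tendsto (fun Λ => lam₁ Λ / (k : ℝ) - (Λ - lam₁ Λ) / ((N - k : ℕ) : ℝ)) atTop
      (nhds (1 / ((N - k : ℕ) : ℝ) - 1 / (k : ℝ))) := by
  have hk : k ≠ 0 := by
    have : N ≤ 2 * k := by exact_mod_cast (by linarith : (N : ℝ) ≤ 2 * k)
    omega
  have hm : N - k ≠ 0 := by omega
  have hlam₁ : Tendsto lam₁ atTop atTop :=
    tendsto_atTop_of_erlangB_eq hk (fun Λ hΛ => (hlam Λ hΛ).1.1) (fun Λ => add_sub_cancel _ Λ)
      (fun Λ hΛ => (hlam Λ hΛ).2)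
  have hlam₂ : Tendsto (fun Λ => Λ - lam₁ Λ) atTop atTop :=
    tendsto_atTop_of_erlangB_eq hm (fun Λ hΛ => sub_pos.2 (hlam Λ hΛ).1.2)
      (fun Λ => sub_add_cancel Λ _) (fun Λ hΛ => (hlam Λ hΛ).2.symm)
  have hlim := ((tendsto_div_sub_inv_inv_erlangB_sub_one hk).comp hlam₁).sub
    ((tendsto_div_sub_inv_inv_erlangB_sub_one hm).comp hlam₂)
  rw [sub_sub_sub_cancel_left] at hlim
  refine hlim.congr' ?_
  filter_upwards [eventually_gt_atTop 0] with Λ hΛ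
  simp only [Function.comp_apply, (hlam Λ hΛ).2, sub_sub_sub_cancel_right]
end

section
/- Taylor-expansion error bound for Laplace-type integrals: let m ≥ 1 and N be naturals, c₁, c₂ ≥ 0 reals, and let f : ℝ → ℝ be m-times differentiable on [0, ∞) such that the m-th derivative f^{(m)} is nonnegative and nondecreasing on [0, ∞) and satisfies f^{(m)}(t) ≤ c₁ + c₂ t^N for all t ≥ 0. Then for every λ > 0, | ∫₀^∞ f(t) e^{−λ t} dt − ∑_{j=0}^{m−1} f^{(j)}(0) / λ^{j+1} | ≤ c₁ / λ^{m+1} + c₂ ((N+m)! / m!) / λ^{N+m+1}. In particular, the error is o(1/λ^{m−1}) as λ → ∞. -/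
/-! The remainder `R = f - P` of the Taylor polynomial `P` of degree `m - 1` at `0`
satisfies `0 ≤ R t ≤ f⁽ᵐ⁾ t * t ^ m / m!` for `t ≥ 0`: on `[0, t]` the monotone `f⁽ᵐ⁾` lies
between `0` and `f⁽ᵐ⁾ t`, and these bounds propagate down the chain of derivatives by the
comparison principle `g 0 ≤ h 0, g' ≤ h' ⇒ g ≤ h`. Since `∫₀^∞ t ^ n e^{-λt} dt = n! / λ ^ (n + 1)`,
the Laplace transform of `P` is exactly the sum in the statement, so the error is the Laplace
transform of `R`, which lies between `0` and that of `(c₁ + c₂ t ^ N) t ^ m / m!`. -/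

open Filter MeasureTheory Set Real Asymptotics
open scoped Nat

noncomputable def taylorPolyOfDerivs (f : ℕ → ℝ → ℝ) (m : ℕ) (t : ℝ) : ℝ :=
  ∑ j ∈ Finset.range m, f j 0 * (t ^ j / j !)

noncomputable def laplace (g : ℝ → ℝ) (lam : ℝ) : ℝ :=
  ∫ t in Ioi 0, g t * exp (-(lam * t))

lemma hasDerivAt_pow_div_factorial (k : ℕ) (x : ℝ) :
    HasDerivAt (fun y : ℝ => y ^ (k + 1) / (k + 1)!) (x ^ k / k !) x := by
  refine ((hasDerivAt_pow (k + 1) x).div_const ((k + 1)! : ℝ)).congr_deriv ?_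
  rw [Nat.factorial_succ]
  push_cast
  field_simp

lemma hasDerivAt_taylorPolyOfDerivs (f : ℕ → ℝ → ℝ) (m : ℕ) (t : ℝ) :
    HasDerivAt (taylorPolyOfDerivs f (m + 1)) (taylorPolyOfDerivs (fun j => f (j + 1)) m t) t := by
  have hterm : ∀ j ∈ Finset.range m,
      HasDerivAt (fun x : ℝ => f (j + 1) 0 * (x ^ (j + 1) / (j + 1)!))
        (f (j + 1) 0 * (t ^ j / j !)) t :=
    fun j _ => (hasDerivAt_pow_div_factorial j t).const_mul _
  have hsplit : taylorPolyOfDerivs f (m + 1) =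
      fun x => ∑ j ∈ Finset.range m, f (j + 1) 0 * (x ^ (j + 1) / (j + 1)!) + f 0 0 := by
    ext x
    simp [taylorPolyOfDerivs, Finset.sum_range_succ']
  rw [hsplit]
  exact (HasDerivAt.fun_sum hterm).add_const _

lemma taylorPolyOfDerivs_zero (f : ℕ → ℝ → ℝ) (m : ℕ) :
    taylorPolyOfDerivs f (m + 1) 0 = f 0 0 := by
  simp [taylorPolyOfDerivs, Finset.sum_range_succ']

lemma le_of_hasDerivWithinAt_Ici_of_deriv_le {g h g' h' : ℝ → ℝ} {a b : ℝ}
    (hg : ∀ x ∈ Icc a b, HasDerivWithinAt g (g' x) (Ici a) x)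
    (hh : ∀ x ∈ Icc a b, HasDerivWithinAt h (h' x) (Ici a) x)
    (ha : g a ≤ h a) (hle : ∀ x ∈ Ico a b, g' x ≤ h' x) {x : ℝ} (hx : x ∈ Icc a b) :
    g x ≤ h x :=
  image_le_of_deriv_right_le_deriv_boundary
    (fun y hy => (hg y hy).continuousWithinAt.mono Icc_subset_Ici_self)
    (fun y hy => (hg y (Ico_subset_Icc_self hy)).mono (Ici_subset_Ici.2 hy.1)) ha
    (fun y hy => (hh y hy).continuousWithinAt.mono Icc_subset_Ici_self)
    (fun y hy => (hh y (Ico_subset_Icc_self hy)).mono (Ici_subset_Ici.2 hy.1)) hle hx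

theorem taylor_remainder_bounds {m : ℕ} {f : ℕ → ℝ → ℝ} {T L M : ℝ}
    (hderiv : ∀ j < m, ∀ x ∈ Icc 0 T, HasDerivWithinAt (f j) (f (j + 1) x) (Ici 0) x)
    (hL : ∀ x ∈ Icc 0 T, L ≤ f m x) (hM : ∀ x ∈ Icc 0 T, f m x ≤ M) {t : ℝ}
    (ht : t ∈ Icc 0 T) :
    L * (t ^ m / m !) ≤ f 0 t - taylorPolyOfDerivs f m t ∧
      f 0 t - taylorPolyOfDerivs f m t ≤ M * (t ^ m / m !) := by
  induction m generalizing f t with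
  | zero => simpa [taylorPolyOfDerivs] using ⟨hL t ht, hM t ht⟩
  | succ m ih =>
    have hrem := fun x (hx : x ∈ Icc 0 T) => ih (f := fun j => f (j + 1))
      (fun j hj => hderiv (j + 1) (by omega)) hL hM hx
    have hderivRem : ∀ x ∈ Icc 0 T,
        HasDerivWithinAt (fun y => f 0 y - taylorPolyOfDerivs f (m + 1) y)
          (f 1 x - taylorPolyOfDerivs (fun j => f (j + 1)) m x) (Ici 0) x := fun x hx =>
      (hderiv 0 (by omega) x hx).sub (hasDerivAt_taylorPolyOfDerivs f m x).hasDerivWithinAt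
    have hderivPow : ∀ (C : ℝ), ∀ x ∈ Icc (0 : ℝ) T, HasDerivWithinAt
        (fun y => C * (y ^ (m + 1) / (m + 1)!)) (C * (x ^ m / m !)) (Ici 0) x := fun C x _ =>
      ((hasDerivAt_pow_div_factorial m x).const_mul C).hasDerivWithinAt
    have hzero : f 0 0 - taylorPolyOfDerivs f (m + 1) 0 = 0 := by
      rw [taylorPolyOfDerivs_zero, sub_self]
    constructor
    · exact le_of_hasDerivWithinAt_Ici_of_deriv_le (hderivPow L) hderivRem (by simp [hzero])
        (fun x hx => (hrem x (Ico_subset_Icc_self hx)).1) ht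
    · exact le_of_hasDerivWithinAt_Ici_of_deriv_le hderivRem (hderivPow M) (by simp [hzero])
        (fun x hx => (hrem x (Ico_subset_Icc_self hx)).2) ht

lemma integrableOn_pow_mul_exp_neg_mul (n : ℕ) {lam : ℝ} (hlam : 0 < lam) :
    IntegrableOn (fun t : ℝ => t ^ n * exp (-(lam * t))) (Ioi 0) := by
  refine (integrableOn_rpow_mul_exp_neg_mul_rpow (s := n) (p := 1)
    (by linarith [n.cast_nonneg (α := ℝ)]) one_pos hlam).congr_fun (fun t _ => ?_)
    measurableSet_Ioi
  simp only [rpow_natCast, rpow_one, neg_mul]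

lemma laplace_pow (n : ℕ) {lam : ℝ} (hlam : 0 < lam) :
    laplace (fun t => t ^ n) lam = n ! / lam ^ (n + 1) := by
  have h := integral_rpow_mul_exp_neg_mul_Ioi (a := n + 1) (by positivity) hlam
  rw [add_sub_cancel_right, Gamma_nat_eq_factorial, ← Nat.cast_add_one, rpow_natCast] at h
  simp only [rpow_natCast] at h
  rw [laplace, h, one_div, inv_pow]
  ring

lemma integrableOn_const_mul_pow_div_factorial_mul_exp (c : ℝ) (n : ℕ) {lam : ℝ}
    (hlam : 0 < lam) : IntegrableOn (fun t => c * (t ^ n / n !) * exp (-(lam * t))) (Ioi 0) :=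
  IntegrableOn.congr_fun ((integrableOn_pow_mul_exp_neg_mul n hlam).const_mul (c / n !))
    (fun t _ => by ring) measurableSet_Ioi

lemma laplace_const_mul_pow_div_factorial (c : ℝ) (n : ℕ) {lam : ℝ} (hlam : 0 < lam) :
    laplace (fun t => c * (t ^ n / n !)) lam = c / lam ^ (n + 1) := by
  have hpow := laplace_pow n hlam
  rw [laplace] at hpow
  simp only [laplace, mul_assoc, div_mul_eq_mul_div, integral_const_mul, integral_div, hpow]
  field_simp

lemma integrableOn_taylorPolyOfDerivs_mul_exp (f : ℕ → ℝ → ℝ) (m : ℕ) {lam : ℝ}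
    (hlam : 0 < lam) :
    IntegrableOn (fun t => taylorPolyOfDerivs f m t * exp (-(lam * t))) (Ioi 0) := by
  simp only [taylorPolyOfDerivs, Finset.sum_mul]
  exact integrable_finsetSum _ fun j _ =>
    integrableOn_const_mul_pow_div_factorial_mul_exp _ j hlam

lemma laplace_taylorPolyOfDerivs (f : ℕ → ℝ → ℝ) (m : ℕ) {lam : ℝ} (hlam : 0 < lam) :
    laplace (taylorPolyOfDerivs f m) lam = ∑ j ∈ Finset.range m, f j 0 / lam ^ (j + 1) := by
  simp only [laplace, taylorPolyOfDerivs, Finset.sum_mul]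
  rw [integral_finsetSum _ fun j _ => integrableOn_const_mul_pow_div_factorial_mul_exp _ j hlam]
  exact Finset.sum_congr rfl fun j _ => laplace_const_mul_pow_div_factorial _ j hlam

lemma laplace_eq_sum_add_laplace_sub_taylorPolyOfDerivs {f : ℕ → ℝ → ℝ} {m : ℕ} {lam : ℝ}
    (hlam : 0 < lam)
    (hrem : IntegrableOn (fun t => (f 0 t - taylorPolyOfDerivs f m t) * exp (-(lam * t)))
      (Ioi 0)) :
    laplace (f 0) lam = ∑ j ∈ Finset.range m, f j 0 / lam ^ (j + 1) +
      laplace (fun t => f 0 t - taylorPolyOfDerivs f m t) lam := by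
  rw [← laplace_taylorPolyOfDerivs f m hlam, laplace, laplace, laplace,
    ← integral_add (integrableOn_taylorPolyOfDerivs_mul_exp f m hlam) hrem]
  congr 1 with t
  ring

lemma affine_pow_mul_pow_div_factorial (c₁ c₂ : ℝ) (N m : ℕ) (t : ℝ) :
    (c₁ + c₂ * t ^ N) * (t ^ m / m !) =
      c₁ * (t ^ m / m !) + c₂ * ((N + m)! / m !) * (t ^ (N + m) / (N + m)!) := by
  rw [pow_add]
  field_simp

lemma integrableOn_affine_pow_mul_pow_div_factorial_mul_exp (c₁ c₂ : ℝ) (N m : ℕ) {lam : ℝ}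
    (hlam : 0 < lam) :
    IntegrableOn (fun t => (c₁ + c₂ * t ^ N) * (t ^ m / m !) * exp (-(lam * t))) (Ioi 0) := by
  simp_rw [affine_pow_mul_pow_div_factorial, add_mul]
  exact (integrableOn_const_mul_pow_div_factorial_mul_exp _ _ hlam).add
    (integrableOn_const_mul_pow_div_factorial_mul_exp _ _ hlam)

lemma laplace_affine_pow_mul_pow_div_factorial (c₁ c₂ : ℝ) (N m : ℕ) {lam : ℝ}
    (hlam : 0 < lam) :
    laplace (fun t => (c₁ + c₂ * t ^ N) * (t ^ m / m !)) lam =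
      c₁ / lam ^ (m + 1) + c₂ * ((N + m)! / m !) / lam ^ (N + m + 1) := by
  simp_rw [laplace, affine_pow_mul_pow_div_factorial, add_mul]
  rw [integral_add (integrableOn_const_mul_pow_div_factorial_mul_exp _ _ hlam)
    (integrableOn_const_mul_pow_div_factorial_mul_exp _ _ hlam)]
  exact congr_arg₂ (· + ·) (laplace_const_mul_pow_div_factorial _ _ hlam)
    (laplace_const_mul_pow_div_factorial _ _ hlam)

lemma integrableOn_mul_exp_of_nonneg_of_le {g B : ℝ → ℝ} {lam : ℝ}
    (hg : AEStronglyMeasurable g (volume.restrict (Ioi 0)))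
    (hB : IntegrableOn (fun t => B t * exp (-(lam * t))) (Ioi 0))
    (hg0 : ∀ t ∈ Ioi 0, 0 ≤ g t) (hgB : ∀ t ∈ Ioi 0, g t ≤ B t) :
    IntegrableOn (fun t => g t * exp (-(lam * t))) (Ioi 0) := by
  have hexp : Continuous fun t => exp (-(lam * t)) := by fun_prop
  refine hB.mono' (hg.mul hexp.aestronglyMeasurable)
    ((ae_restrict_iff' measurableSet_Ioi).2 (ae_of_all _ fun t ht => ?_))
  rw [norm_mul, norm_of_nonneg (hg0 t ht), norm_of_nonneg (exp_pos _).le]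
  exact mul_le_mul_of_nonneg_right (hgB t ht) (exp_pos _).le

lemma laplace_nonneg {g : ℝ → ℝ} (hg0 : ∀ t ∈ Ioi 0, 0 ≤ g t) (lam : ℝ) : 0 ≤ laplace g lam :=
  setIntegral_nonneg measurableSet_Ioi fun t ht => mul_nonneg (hg0 t ht) (exp_pos _).le

lemma laplace_mono {g B : ℝ → ℝ} {lam : ℝ}
    (hg : IntegrableOn (fun t => g t * exp (-(lam * t))) (Ioi 0))
    (hB : IntegrableOn (fun t => B t * exp (-(lam * t))) (Ioi 0))
    (hgB : ∀ t ∈ Ioi 0, g t ≤ B t) : laplace g lam ≤ laplace B lam :=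
  setIntegral_mono_on hg hB measurableSet_Ioi fun t ht =>
    mul_le_mul_of_nonneg_right (hgB t ht) (exp_pos _).le

lemma isLittleO_const_div_pow_one_div_pow (c : ℝ) {p q : ℕ} (hpq : p < q) :
    (fun x : ℝ => c / x ^ q) =o[atTop] fun x => 1 / x ^ p := by
  have h := ((isLittleO_pow_pow_atTop_of_lt (𝕜 := ℝ) hpq).inv_rev
    (Eventually.of_forall fun x hx => by simp_all; omega)).const_mul_left c
  simpa only [div_eq_mul_inv, one_mul] using h

lemma isLittleO_one_div_pow_of_abs_le {E : ℝ → ℝ} {a b : ℝ} {p q r : ℕ}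
    (hq : p < q) (hr : p < r)
    (hE : ∀ x > 0, |E x| ≤ a / x ^ q + b / x ^ r) : E =o[atTop] fun x => 1 / x ^ p := by
  refine IsBigO.trans_isLittleO (g := fun x => a / x ^ q + b / x ^ r) ?_
    ((isLittleO_const_div_pow_one_div_pow a hq).add (isLittleO_const_div_pow_one_div_pow b hr))
  refine IsBigO.of_bound' ((eventually_gt_atTop 0).mono fun x hx => ?_)
  exact (hE x hx).trans (le_abs_self _)

theorem laplace_taylor_error_bound_general (m N : ℕ) (hm : 1 ≤ m)
    (c₁ c₂ : ℝ)
    (f : ℕ → ℝ → ℝ)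
    (hderiv : ∀ j < m, ∀ t ∈ Set.Ici (0 : ℝ),
      HasDerivWithinAt (f j) (f (j + 1) t) (Set.Ici 0) t)
    (hnonneg : ∀ t ∈ Set.Ici (0 : ℝ), 0 ≤ f m t)
    (hmono : MonotoneOn (f m) (Set.Ici (0 : ℝ)))
    (hbound : ∀ t ∈ Set.Ici (0 : ℝ), f m t ≤ c₁ + c₂ * t ^ N) :
    (∀ lam : ℝ, 0 < lam →
      |(∫ t in Set.Ioi (0 : ℝ), f 0 t * Real.exp (-(lam * t))) -
          ∑ j ∈ Finset.range m, f j 0 / lam ^ (j + 1)| ≤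
        c₁ / lam ^ (m + 1) +
          c₂ * (((N + m).factorial : ℝ) / (m.factorial : ℝ)) / lam ^ (N + m + 1)) ∧
      (fun lam : ℝ =>
          (∫ t in Set.Ioi (0 : ℝ), f 0 t * Real.exp (-(lam * t))) -
            ∑ j ∈ Finset.range m, f j 0 / lam ^ (j + 1)) =o[atTop]
        fun lam : ℝ => 1 / lam ^ (m - 1) := by
  set R := fun t => f 0 t - taylorPolyOfDerivs f m t
  have hR : ∀ t ∈ Ioi 0, 0 ≤ R t ∧ R t ≤ (c₁ + c₂ * t ^ N) * (t ^ m / m !) := fun t ht => by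
    have ht0 : (0 : ℝ) ≤ t := le_of_lt ht
    obtain ⟨hlow, hhigh⟩ := taylor_remainder_bounds (T := t) (L := 0) (M := f m t)
      (fun j hj x hx => hderiv j hj x hx.1) (fun x hx => hnonneg x hx.1)
      (fun x hx => hmono hx.1 ht0 hx.2) ⟨ht0, le_rfl⟩
    exact ⟨by rwa [zero_mul] at hlow,
      hhigh.trans (mul_le_mul_of_nonneg_right (hbound t ht0) (by positivity))⟩
  have hRmeas : AEStronglyMeasurable R (volume.restrict (Ioi 0)) := by
    have hf₀ : ContinuousOn (f 0) (Ioi 0) := fun t ht =>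
      (hderiv 0 hm t (Ioi_subset_Ici_self ht)).continuousWithinAt.mono Ioi_subset_Ici_self
    have hP : Continuous (taylorPolyOfDerivs f m) := by unfold taylorPolyOfDerivs; fun_prop
    exact (hf₀.sub hP.continuousOn).aestronglyMeasurable measurableSet_Ioi
  have herr : ∀ lam > 0, |laplace (f 0) lam - ∑ j ∈ Finset.range m, f j 0 / lam ^ (j + 1)| ≤
      c₁ / lam ^ (m + 1) + c₂ * ((N + m)! / m !) / lam ^ (N + m + 1) := fun lam hlam => by
    have hBint := integrableOn_affine_pow_mul_pow_div_factorial_mul_exp c₁ c₂ N m hlam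
    have hRint := integrableOn_mul_exp_of_nonneg_of_le hRmeas hBint (fun t ht => (hR t ht).1)
      (fun t ht => (hR t ht).2)
    rw [laplace_eq_sum_add_laplace_sub_taylorPolyOfDerivs hlam hRint, add_sub_cancel_left,
      abs_of_nonneg (laplace_nonneg (fun t ht => (hR t ht).1) lam),
      ← laplace_affine_pow_mul_pow_div_factorial c₁ c₂ N m hlam]
    exact laplace_mono hRint hBint fun t ht => (hR t ht).2
  exact ⟨herr, isLittleO_one_div_pow_of_abs_le (by omega) (by omega) herr⟩

/-- Taylor-expansion error bound for Laplace-type integrals.  Here `f j` denotes the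
`j`-th derivative of the function `f 0` on `[0, ∞)` (encoded by the hypothesis
`hderiv`), with `f m` the `m`-th derivative.  If `f m` is nonnegative, nondecreasing and
satisfies `f m t ≤ c₁ + c₂ t^N` on `[0, ∞)`, then for every `λ > 0`,
`|∫₀^∞ f(t) e^{−λ t} dt − ∑_{j<m} f^{(j)}(0)/λ^{j+1}| ≤ c₁/λ^{m+1} + c₂ ((N+m)!/m!)/λ^{N+m+1}`;
in particular the error is `o(1/λ^{m−1})` as `λ → ∞`. -/
theorem laplace_taylor_error_bound (m N : ℕ) (hm : 1 ≤ m)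
    (c₁ c₂ : ℝ) (hc₁ : 0 ≤ c₁) (hc₂ : 0 ≤ c₂)
    (f : ℕ → ℝ → ℝ)
    (hderiv : ∀ j < m, ∀ t ∈ Set.Ici (0 : ℝ),
      HasDerivWithinAt (f j) (f (j + 1) t) (Set.Ici 0) t)
    (hnonneg : ∀ t ∈ Set.Ici (0 : ℝ), 0 ≤ f m t)
    (hmono : MonotoneOn (f m) (Set.Ici (0 : ℝ)))
    (hbound : ∀ t ∈ Set.Ici (0 : ℝ), f m t ≤ c₁ + c₂ * t ^ N) :
    (∀ lam : ℝ, 0 < lam →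
      |(∫ t in Set.Ioi (0 : ℝ), f 0 t * Real.exp (-(lam * t))) -
          ∑ j ∈ Finset.range m, f j 0 / lam ^ (j + 1)| ≤
        c₁ / lam ^ (m + 1) +
          c₂ * (((N + m).factorial : ℝ) / (m.factorial : ℝ)) / lam ^ (N + m + 1)) ∧
      (fun lam : ℝ =>
          (∫ t in Set.Ioi (0 : ℝ), f 0 t * Real.exp (-(lam * t))) -
            ∑ j ∈ Finset.range m, f j 0 / lam ^ (j + 1)) =o[atTop]
        fun lam : ℝ => 1 / lam ^ (m - 1) :=
  laplace_taylor_error_bound_general m N hm c₁ c₂ f hderiv hnonneg hmono hbound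
end

section
/- Nash-equilibrium utilities in the symmetric resource-sharing game with an adamant player: let k ≥ 1, λ > 0, η > 0, γ > 0, and â > (k+1)/γ. Consider the (k+1)-player game with players 0, 1, …, k, where player 0 has influence factor λ₀ = ηλ and players 1, …, k have influence factor λ, each choosing an action b_m ∈ [0, â], with payoffs φ_m(b) = λ_m b_m / (∑_{j=0}^{k} λ_j b_j) − γ b_m. Then at every Nash equilibrium b with ∑_j λ_j b_j > 0, the payoffs are: for each m ∈ {1, …, k}, φ_m(b) = 1/(1 + kη)² if η > (k−1)/k, and φ_m(b) = 1/k² otherwise; and φ₀(b) = ((1 − k + kη)/(1 + kη))² if η > (k−1)/k, and φ₀(b) = 0 otherwise. -/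
/-!
If the others' weighted effort `c` is positive, player `m`'s deviation payoff is
`x ↦ λₘx/(c + λₘx) − γx`, whose derivative at `bₘ` is `λₘc/S² − γ` (`S` the total).
Equilibrium forces `c > 0` and `γbₘ < 1 ≤ γâ`, so Fermat's rule on `[0, â]` gives
`λₘc/S² ≤ γ`, with equality when `bₘ > 0`. Hence each share `λₘbₘ/S` is
`max 0 (1 − γS/λₘ)`, and the payoff `share − γbₘ = share · (1 − γS/λₘ)` is its square.
The shares sum to one; with `t = γS/λ` this reads `max 0 (1 − t/η) + k·max 0 (1 − t) = 1`,
and solving for `t` gives the two regimes.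
-/

/-- Payoff of player `m` in the resource-sharing game among the players `0, …, n − 1`
with influence factors `lamInf` and cost factor `γ`:
`φ_m(b) = lamInf m * b m / (∑_{j<n} lamInf j * b j) − γ * b m`. -/
noncomputable def rsgPayoff (n : ℕ) (lamInf : ℕ → ℝ) (γ : ℝ) (b : ℕ → ℝ) (m : ℕ) : ℝ :=
  lamInf m * b m / (∑ j ∈ Finset.range n, lamInf j * b j) - γ * b m

/-- A Nash equilibrium of the resource-sharing game with actions in `[0, â]`: no player
`m < n` can strictly increase its payoff by unilaterally changing its action. -/
def IsNashRSG (n : ℕ) (lamInf : ℕ → ℝ) (γ ahat : ℝ) (b : ℕ → ℝ) : Prop :=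
  ∀ m < n, ∀ x ∈ Set.Icc (0 : ℝ) ahat,
    rsgPayoff n lamInf γ (Function.update b m x) m ≤ rsgPayoff n lamInf γ b m

open Set Finset

theorem HasDerivAt.nonpos_of_isMaxOn_Icc {f : ℝ → ℝ} {f' a b x : ℝ} (hf : HasDerivAt f f' x)
    (hmax : IsMaxOn f (Icc a b) x) (hx : x ∈ Ico a b) : f' ≤ 0 := by
  have hcone : b - x ∈ posTangentConeAt (Icc a b) x := by
    apply mem_posTangentConeAt_of_segment_subset
    rw [add_sub_cancel, segment_eq_Icc hx.2.le]
    exact Icc_subset_Icc_left hx.1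
  have h := hmax.localize.hasFDerivWithinAt_nonpos hf.hasFDerivAt.hasFDerivWithinAt hcone
  simp only [ContinuousLinearMap.toSpanSingleton_apply, smul_eq_mul] at h
  exact nonpos_of_mul_nonpos_right h (sub_pos.2 hx.2)

theorem HasDerivAt.eq_zero_of_isMaxOn_Icc {f : ℝ → ℝ} {f' a b x : ℝ} (hf : HasDerivAt f f' x)
    (hmax : IsMaxOn f (Icc a b) x) (hx : x ∈ Ioo a b) : f' = 0 :=
  (hmax.isLocalMax (Icc_mem_nhds hx.1 hx.2)).hasDerivAt_eq_zero hf

theorem hasDerivAt_share_sub_cost {A c γ x : ℝ} (hx : c + A * x ≠ 0) :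
    HasDerivAt (fun y => A * y / (c + A * y) - γ * y) (A * c / (c + A * x) ^ 2 - γ) x := by
  have hAy : HasDerivAt (fun y => A * y) A x := by simpa using (hasDerivAt_id x).const_mul A
  exact ((hAy.div (hAy.const_add c) hx).sub ((hasDerivAt_id x).const_mul γ |>.congr_deriv
    (mul_one γ))).congr_deriv (by ring)

noncomputable def rsgTotal (n : ℕ) (lamInf b : ℕ → ℝ) : ℝ :=
  ∑ j ∈ range n, lamInf j * b j

section

variable {n m : ℕ} {lamInf : ℕ → ℝ} {γ ahat : ℝ} {b : ℕ → ℝ}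

theorem rsgPayoff_eq_div_rsgTotal :
    rsgPayoff n lamInf γ b m = lamInf m * b m / rsgTotal n lamInf b - γ * b m :=
  rfl

theorem rsgTotal_update (hm : m < n) (x : ℝ) :
    rsgTotal n lamInf (Function.update b m x) =
      rsgTotal n lamInf b - lamInf m * b m + lamInf m * x := by
  unfold rsgTotal
  rw [← add_sum_erase _ _ (mem_range.2 hm), ← add_sum_erase _ _ (mem_range.2 hm),
    Function.update_self,
    sum_congr rfl fun j hj => by rw [Function.update_of_ne (ne_of_mem_erase hj)]]
  ring

theorem rsgPayoff_update (hm : m < n) (x : ℝ) :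
    rsgPayoff n lamInf γ (Function.update b m x) m =
      lamInf m * x / (rsgTotal n lamInf b - lamInf m * b m + lamInf m * x) - γ * x := by
  rw [rsgPayoff_eq_div_rsgTotal, rsgTotal_update hm, Function.update_self]

theorem rsgTotal_sub_nonneg (hlam : ∀ j < n, 0 ≤ lamInf j) (hb : ∀ j < n, 0 ≤ b j)
    (hm : m < n) : 0 ≤ rsgTotal n lamInf b - lamInf m * b m := by
  rw [rsgTotal, ← add_sum_erase _ _ (mem_range.2 hm), add_sub_cancel_left]
  refine sum_nonneg fun j hj => ?_
  have hj' := mem_range.1 (mem_of_mem_erase hj)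
  exact mul_nonneg (hlam j hj') (hb j hj')

namespace IsNashRSG

theorem isMaxOn (hNE : IsNashRSG n lamInf γ ahat b) (hm : m < n) :
    IsMaxOn
      (fun x => lamInf m * x / (rsgTotal n lamInf b - lamInf m * b m + lamInf m * x) - γ * x)
      (Icc 0 ahat) (b m) := by
  refine isMaxOn_iff.2 fun x hx => ?_
  have h := hNE m hm x hx
  rw [rsgPayoff_update hm, rsgPayoff_eq_div_rsgTotal] at h
  simpa only [sub_add_cancel] using h

theorem rsgTotal_sub_pos (hNE : IsNashRSG n lamInf γ ahat b) (hγ : 0 < γ)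
    (hlam : ∀ j < n, 0 < lamInf j) (hb : ∀ j < n, b j ∈ Icc 0 ahat)
    (hS : 0 < rsgTotal n lamInf b) (hm : m < n) : 0 < rsgTotal n lamInf b - lamInf m * b m := by
  have hnonneg := rsgTotal_sub_nonneg (fun j hj => (hlam j hj).le) (fun j hj => (hb j hj).1) hm
  refine hnonneg.lt_of_ne' fun h0 => ?_
  -- a player without active opponents gains by halving its action
  have hSm : rsgTotal n lamInf b = lamInf m * b m := sub_eq_zero.1 h0
  have hbm : 0 < b m := pos_of_mul_pos_right (hSm ▸ hS) (hlam m hm).le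
  have h := isMaxOn_iff.1 (hNE.isMaxOn hm) (b m / 2) ⟨by linarith, by linarith [(hb m hm).2]⟩
  have hlm := hlam m hm
  simp only [h0, zero_add] at h
  rw [div_self (by positivity), div_self (by positivity)] at h
  nlinarith

theorem mul_lt_one (hNE : IsNashRSG n lamInf γ ahat b) (hγ : 0 < γ)
    (hlam : ∀ j < n, 0 < lamInf j) (hb : ∀ j < n, b j ∈ Icc 0 ahat)
    (hS : 0 < rsgTotal n lamInf b) (hm : m < n) : γ * b m < 1 := by
  have hshare : lamInf m * b m / rsgTotal n lamInf b < 1 :=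
    (div_lt_one hS).2 (by linarith [hNE.rsgTotal_sub_pos hγ hlam hb hS hm])
  have h := isMaxOn_iff.1 (hNE.isMaxOn hm) 0 ⟨le_rfl, (hb m hm).1.trans (hb m hm).2⟩
  simp only [mul_zero, add_zero, zero_div, sub_zero, sub_add_cancel] at h
  linarith

theorem share_eq (hNE : IsNashRSG n lamInf γ ahat b) (hγ : 0 < γ) (hahat : 1 ≤ γ * ahat)
    (hlam : ∀ j < n, 0 < lamInf j) (hb : ∀ j < n, b j ∈ Icc 0 ahat)
    (hS : 0 < rsgTotal n lamInf b) (hm : m < n) :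
    lamInf m * b m / rsgTotal n lamInf b = max 0 (1 - γ * rsgTotal n lamInf b / lamInf m) := by
  set S := rsgTotal n lamInf b
  have hlm := hlam m hm
  have hbm : b m ∈ Ico 0 ahat := ⟨(hb m hm).1, by nlinarith [hNE.mul_lt_one hγ hlam hb hS hm]⟩
  have hderiv := hasDerivAt_share_sub_cost (A := lamInf m) (γ := γ) (c := S - lamInf m * b m)
    (x := b m) (by rw [sub_add_cancel]; exact hS.ne')
  rw [sub_add_cancel] at hderiv
  have hfoc := hderiv.nonpos_of_isMaxOn_Icc (hNE.isMaxOn hm) hbm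
  rcases hbm.1.eq_or_lt with hzero | hpos
  · rw [← hzero, mul_zero, zero_div, eq_comm, max_eq_left_iff, sub_nonpos, le_div_iff₀ hlm]
    rw [← hzero, mul_zero, sub_zero, sq, mul_div_mul_right _ _ hS.ne', sub_nonpos,
      div_le_iff₀ hS] at hfoc
    linarith
  · have hfoc' := hderiv.eq_zero_of_isMaxOn_Icc (hNE.isMaxOn hm) ⟨hpos, hbm.2⟩
    have hshare : lamInf m * b m / S = 1 - γ * S / lamInf m := by
      field_simp at hfoc' ⊢
      linarith
    rw [hshare, max_eq_right (hshare ▸ by positivity)]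

theorem rsgPayoff_eq_sq (hNE : IsNashRSG n lamInf γ ahat b) (hγ : 0 < γ) (hahat : 1 ≤ γ * ahat)
    (hlam : ∀ j < n, 0 < lamInf j) (hb : ∀ j < n, b j ∈ Icc 0 ahat)
    (hS : 0 < rsgTotal n lamInf b) (hm : m < n) :
    rsgPayoff n lamInf γ b m = (max 0 (1 - γ * rsgTotal n lamInf b / lamInf m)) ^ 2 := by
  set t := 1 - γ * rsgTotal n lamInf b / lamInf m with ht_def
  have hpayoff : rsgPayoff n lamInf γ b m = lamInf m * b m / rsgTotal n lamInf b * t := by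
    have := (hlam m hm).ne'
    rw [rsgPayoff_eq_div_rsgTotal, ht_def]
    field_simp
  rw [hpayoff, hNE.share_eq hγ hahat hlam hb hS hm]
  rcases le_total t 0 with ht | ht
  · rw [max_eq_left ht]
    ring
  · rw [max_eq_right ht, sq]

theorem sum_max_eq_one (hNE : IsNashRSG n lamInf γ ahat b) (hγ : 0 < γ) (hahat : 1 ≤ γ * ahat)
    (hlam : ∀ j < n, 0 < lamInf j) (hb : ∀ j < n, b j ∈ Icc 0 ahat)
    (hS : 0 < rsgTotal n lamInf b) :
    ∑ m ∈ range n, max 0 (1 - γ * rsgTotal n lamInf b / lamInf m) = 1 := by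
  rw [← sum_congr rfl fun m hm => hNE.share_eq hγ hahat hlam hb hS (mem_range.1 hm), ← sum_div,
    ← rsgTotal, div_self hS.ne']

end IsNashRSG

end

theorem adamant_shares_of_sum_eq_one {k : ℕ} (hk : 1 ≤ k) {η t : ℝ} (hη : 0 < η) (ht : 0 < t)
    (h : max 0 (1 - t / η) + k * max 0 (1 - t) = 1) :
    max 0 (1 - t) = (if ((k : ℝ) - 1) / k < η then 1 / (1 + k * η) else 1 / k) ∧
      max 0 (1 - t / η) =
        if ((k : ℝ) - 1) / k < η then (1 - k + k * η) / (1 + k * η) else 0 := by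
  have hk' : (1 : ℝ) ≤ k := by exact_mod_cast hk
  have htη : 0 < t / η := div_pos ht hη
  have ht1 : t < 1 := by
    by_contra! ht1
    rw [max_eq_left (by linarith : 1 - t ≤ 0), mul_zero, add_zero] at h
    linarith [max_lt zero_lt_one (by linarith : 1 - t / η < 1)]
  rw [max_eq_right (by linarith : 0 ≤ 1 - t)] at h ⊢
  rcases lt_or_ge t η with hlt | hge
  · rw [max_eq_right (by rw [sub_nonneg, div_le_one hη]; exact hlt.le)] at h ⊢
    have hsolve : t * (1 + k * η) = k * η := by
      field_simp at h
      linarith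
    have hcond : ((k : ℝ) - 1) / k < η := by
      rw [div_lt_iff₀ (by positivity)]
      nlinarith
    simp only [if_pos hcond]
    constructor <;> field_simp <;> linarith
  · rw [max_eq_left (by rw [sub_nonpos, le_div_iff₀ hη]; linarith)] at h ⊢
    have hcond : ¬ ((k : ℝ) - 1) / k < η := by
      rw [not_lt, le_div_iff₀ (by positivity)]
      nlinarith
    rw [if_neg hcond, if_neg hcond]
    refine ⟨?_, rfl⟩
    field_simp
    linarith

/-- Nash-equilibrium utilities in the symmetric resource-sharing game with an adamant
player: players `0, 1, …, k`, player `0` (the adamant player) with influence factor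
`η·λ` and players `1, …, k` with influence factor `λ`, actions in `[0, â]` with
`â > (k+1)/γ`.  At every Nash equilibrium `b` with `∑_j λ_j b_j > 0`: for each
`1 ≤ m ≤ k`, `φ_m(b) = 1/(1 + kη)²` if `η > (k−1)/k` and `1/k²` otherwise, and
`φ₀(b) = ((1 − k + kη)/(1 + kη))²` if `η > (k−1)/k` and `0` otherwise. -/
theorem symmetric_rsg_nash_utilities (k : ℕ) (hk : 1 ≤ k)
    (lam η γ ahat : ℝ) (hlam : 0 < lam) (hη : 0 < η) (hγ : 0 < γ)
    (hahat : ((k : ℝ) + 1) / γ < ahat)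
    (lamInf : ℕ → ℝ) (hInf : ∀ m, lamInf m = if m = 0 then η * lam else lam)
    (b : ℕ → ℝ) (hb : ∀ m < k + 1, b m ∈ Set.Icc (0 : ℝ) ahat)
    (hNE : IsNashRSG (k + 1) lamInf γ ahat b)
    (hsum : 0 < ∑ j ∈ Finset.range (k + 1), lamInf j * b j) :
    (∀ m, 1 ≤ m → m ≤ k →
      rsgPayoff (k + 1) lamInf γ b m =
        if ((k : ℝ) - 1) / (k : ℝ) < η then 1 / (1 + (k : ℝ) * η) ^ 2
        else 1 / (k : ℝ) ^ 2) ∧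
    rsgPayoff (k + 1) lamInf γ b 0 =
      if ((k : ℝ) - 1) / (k : ℝ) < η then
        ((1 - (k : ℝ) + (k : ℝ) * η) / (1 + (k : ℝ) * η)) ^ 2
      else 0 := by
  have hlam' : ∀ m < k + 1, 0 < lamInf m := fun m _ => by
    rw [hInf]; split_ifs <;> positivity
  have hahat' : 1 ≤ γ * ahat := by
    rw [div_lt_iff₀ hγ] at hahat
    linarith [(k.cast_nonneg : (0 : ℝ) ≤ k)]
  change 0 < rsgTotal (k + 1) lamInf b at hsum
  set t := γ * rsgTotal (k + 1) lamInf b / lam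
  have ht0 : γ * rsgTotal (k + 1) lamInf b / lamInf 0 = t / η := by
    rw [hInf, if_pos rfl, mul_comm η, ← div_div]
  have htm : ∀ m ≠ 0, γ * rsgTotal (k + 1) lamInf b / lamInf m = t := fun m hm => by
    rw [hInf, if_neg hm]
  have hbalance := hNE.sum_max_eq_one hγ hahat' hlam' hb hsum
  rw [sum_range_succ', sum_congr rfl fun i _ => by rw [htm (i + 1) i.succ_ne_zero], sum_const,
    card_range, nsmul_eq_mul, ht0, add_comm] at hbalance
  obtain ⟨hsym, hadamant⟩ :=
    adamant_shares_of_sum_eq_one hk hη (div_pos (mul_pos hγ hsum) hlam) hbalance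
  have hpayoff := fun (m : ℕ) (hm : m < k + 1) => hNE.rsgPayoff_eq_sq hγ hahat' hlam' hb hsum hm
  refine ⟨fun m h1 h2 => ?_, ?_⟩
  · rw [hpayoff m (by omega), htm m (by omega), hsym]
    split_ifs <;> rw [div_pow, one_pow]
  · rw [hpayoff 0 (by omega), ht0, hadamant]
    split_ifs <;> simp
end

section
/- The grand coalition maximizes social welfare when the adamant player is at least as strong as each player: for every real η ≥ 1 and every integer k ≥ 1, k/(1 + kη)² ≤ 1/(1 + η)². Equivalently, among the candidate values {k λ²/(λ + k λ₀)² : k = 1, …, n} of the sum utility of the players at a partition with k coalitions (where η = λ₀/λ ≥ 1), the value at k = 1 is the largest. -/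
/-- The grand coalition maximizes social welfare when the adamant player is at least as
strong as each player: for every real `η ≥ 1` and every integer `k ≥ 1`,
`k/(1 + kη)² ≤ 1/(1 + η)²`. -/
theorem grand_coalition_social_optimal (η : ℝ) (hη : 1 ≤ η) (k : ℕ) (hk : 1 ≤ k) :
    (k : ℝ) / (1 + (k : ℝ) * η) ^ 2 ≤ 1 / (1 + η) ^ 2 := by
  have hk1 : (1 : ℝ) ≤ (k : ℝ) := by exact_mod_cast hk
  have h1 : (0 : ℝ) < (1 + (k : ℝ) * η) ^ 2 := by positivity
  have h2 : (0 : ℝ) < (1 + η) ^ 2 := by positivity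
  rw [div_le_div_iff₀ h1 h2]
  nlinarith [mul_nonneg (sub_nonneg.2 hk1) (sub_nonneg.2 hη), sq_nonneg (η - 1),
    mul_nonneg (sub_nonneg.2 hk1) (sq_nonneg η)]
end

section
/- Adding a weakest significant player decreases the aggregate Nash-equilibrium utility: let k ≥ 1, let w₁, …, w_k > 0 with S := ∑_{i=1}^{k} wᵢ and S − (k−1) w_m > 0 for every m (all players significant), and let w be a real with w ≥ w_m for all m and S + w − kw > 0. Then ∑_{m=1}^{k} ((S + w − k w_m)/(S + w))² + ((S + (1−k) w)/(S + w))² ≤ ∑_{m=1}^{k} ((S − (k−1) w_m)/S)². -/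
/-!
With `n` players of total weight `S` and sum of squared weights `Q`, the equilibrium utilities
sum to `2 - n + (n - 1)² Q / S²`. A player of weight `v` joining `k` players turns `(k, S, Q)`
into `(k + 1, S + v, Q + v²)`.
The difference of the two sums, times `S² (S + v)²`, is affine in `Q` and decreasing since
`S > (k - 1) v`; as every `wₘ ≤ v` we have `Q ≤ v S`, and at `Q = v S` the difference equals
`S (S + v) (S - (k - 1) v)² ≥ 0`.
-/

open Finset

section UtilitySum

variable {ι R : Type*}

theorem sum_sub_mul_sq [CommRing R] (s : Finset ι) (a c : R) (w : ι → R) :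
    ∑ m ∈ s, (a - c * w m) ^ 2 =
      #s * a ^ 2 - 2 * a * c * ∑ m ∈ s, w m + c ^ 2 * ∑ m ∈ s, w m ^ 2 := by
  simp only [sub_sq, sum_add_distrib, sum_sub_distrib, mul_pow, ← mul_sum, sum_const,
    nsmul_eq_mul]
  ring

theorem sum_equilibrium_utility_eq [Fintype ι] [Field R] (w : ι → R) (hS : ∑ i, w i ≠ 0) :
    ∑ m, (((∑ i, w i) - ((Fintype.card ι : R) - 1) * w m) / ∑ i, w i) ^ 2 =
      2 - Fintype.card ι +
        ((Fintype.card ι : R) - 1) ^ 2 * (∑ i, w i ^ 2) / (∑ i, w i) ^ 2 := by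
  simp_rw [div_pow, ← sum_div, sum_sub_mul_sq, card_univ]
  field_simp
  ring

end UtilitySum

theorem equilibrium_utility_add_player_le {k S Q v : ℝ} (hk : 1 ≤ k) (hS : 0 < S)
    (hv : 0 ≤ v) (hQ : Q ≤ v * S) (hD : 0 < S - (k - 1) * v) :
    2 - (k + 1) + k ^ 2 * (Q + v ^ 2) / (S + v) ^ 2 ≤ 2 - k + (k - 1) ^ 2 * Q / S ^ 2 := by
  have hT : 0 < S + v := by linarith
  have hslope : 0 ≤ (k - 1) * (S + v) + k * S := by nlinarith
  have hQ' : 0 ≤ v * S - Q := by linarith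
  have hdiff : 2 - k + (k - 1) ^ 2 * Q / S ^ 2 - (2 - (k + 1) + k ^ 2 * (Q + v ^ 2) / (S + v) ^ 2) =
      (S * (S + v) * (S - (k - 1) * v) ^ 2 +
        (v * S - Q) * (S - (k - 1) * v) * ((k - 1) * (S + v) + k * S)) / (S ^ 2 * (S + v) ^ 2) := by
    field_simp
    ring
  rw [← sub_nonneg, hdiff]
  positivity

theorem adding_weakest_player_decreases_sum_utility_general (k : ℕ) (hk : 1 ≤ k)
    (w : Fin k → ℝ) (hw : ∀ m, 0 < w m) (wnew : ℝ)
    (hge : ∀ m, w m ≤ wnew)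
    (hnewsig : 0 < (∑ i, w i) + wnew - (k : ℝ) * wnew) :
    (∑ m, (((∑ i, w i) + wnew - (k : ℝ) * w m) / ((∑ i, w i) + wnew)) ^ 2) +
        (((∑ i, w i) + (1 - (k : ℝ)) * wnew) / ((∑ i, w i) + wnew)) ^ 2 ≤
      ∑ m, (((∑ i, w i) - ((k : ℝ) - 1) * w m) / (∑ i, w i)) ^ 2 := by
  have hS : 0 < ∑ i, w i := sum_pos (fun i _ => hw i) ⟨⟨0, hk⟩, mem_univ _⟩
  have hv : 0 < wnew := (hw ⟨0, hk⟩).trans_le (hge _)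
  have hQ : ∑ i, w i ^ 2 ≤ wnew * ∑ i, w i := by
    rw [mul_sum]
    exact sum_le_sum fun i _ => by nlinarith [hw i, hge i]
  have hjoin := sum_equilibrium_utility_eq (Fin.snoc w wnew : Fin (k + 1) → ℝ) (by
    rw [Fin.sum_univ_castSucc]; simp only [Fin.snoc_castSucc, Fin.snoc_last]; positivity)
  simp only [Fin.sum_univ_castSucc, Fin.snoc_castSucc, Fin.snoc_last, Fintype.card_fin,
    Nat.cast_add, Nat.cast_one, add_sub_cancel_right] at hjoin
  have hold := sum_equilibrium_utility_eq w hS.ne'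
  simp only [Fintype.card_fin] at hold
  rw [hold, show (∑ i, w i) + (1 - (k : ℝ)) * wnew = (∑ i, w i) + wnew - k * wnew by ring,
    hjoin]
  exact equilibrium_utility_add_player_le (by exact_mod_cast hk) hS hv.le hQ (by linarith)

/-- Adding a weakest significant player decreases the aggregate Nash-equilibrium
utility: let `k ≥ 1`, `w₁, …, w_k > 0` with `S = ∑ wᵢ` and `S − (k−1)wₘ > 0` for every
`m` (all players significant), and let `w ≥ wₘ` for all `m` with `S + w − kw > 0`.  Then
`∑ₘ ((S + w − k wₘ)/(S + w))² + ((S + (1−k) w)/(S + w))² ≤ ∑ₘ ((S − (k−1) wₘ)/S)²`. -/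
theorem adding_weakest_player_decreases_sum_utility (k : ℕ) (hk : 1 ≤ k)
    (w : Fin k → ℝ) (hw : ∀ m, 0 < w m) (wnew : ℝ)
    (hsig : ∀ m, 0 < (∑ i, w i) - ((k : ℝ) - 1) * w m)
    (hge : ∀ m, w m ≤ wnew)
    (hnewsig : 0 < (∑ i, w i) + wnew - (k : ℝ) * wnew) :
    (∑ m, (((∑ i, w i) + wnew - (k : ℝ) * w m) / ((∑ i, w i) + wnew)) ^ 2) +
        (((∑ i, w i) + (1 - (k : ℝ)) * wnew) / ((∑ i, w i) + wnew)) ^ 2 ≤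
      ∑ m, (((∑ i, w i) - ((k : ℝ) - 1) * w m) / (∑ i, w i)) ^ 2 :=
  adding_weakest_player_decreases_sum_utility_general k hk w hw wnew hge hnewsig
end
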